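/- arXiv:1801.06169 — 7 statements merged into one kernel-verified Lean document; each statement's English description precedes it below -/
import Mathlib

section
/- The number of 4-cycles in the complete bipartite graph K_{ℓ,m} equals C(ℓ,2)·C(m,2), and C(e-d+2, 2) − C(ℓ,2)·C(m,2) = (ℓ-1)(ℓ-2)(m-1)(m-2)/4 ≥ 0, where d = ℓ+m and e = ℓm. Equality C(e-d+2,2) = c_4(K_{ℓ,m}) holds if and only if ℓ ≤ 2 or m ≤ 2. -/
/-! An ordered 4-cycle `a ~ b ~ c ~ d ~ a` of `K_{ℓ,m}` alternates between the two sides, so it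
is determined by the side of `a` and an ordered pair of distinct vertices on each side: there are
`2 · ℓ(ℓ-1) · m(m-1) = 8 · C(ℓ,2) · C(m,2)` of them. The rest is the polynomial identity
`C(e-d+2,2) - C(ℓ,2)·C(m,2) = (ℓ-1)(ℓ-2)(m-1)(m-2)/4` and the fact that `(n-1)(n-2) ≥ 0` for every
integer `n`, with equality exactly at `n = 1, 2`. -/

open SimpleGraph

variable {V : Type*}

/-- Number of 4-cycle subgraphs of `G`: each 4-cycle corresponds to 8 ordered
tuples `(a,b,c,d)` of vertices with `a~b~c~d~a` and `a ≠ c`, `b ≠ d`. -/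
noncomputable def c4 (G : SimpleGraph V) : ℕ :=
  Nat.card {p : V × V × V × V //
    G.Adj p.1 p.2.1 ∧ G.Adj p.2.1 p.2.2.1 ∧ G.Adj p.2.2.1 p.2.2.2 ∧ G.Adj p.2.2.2 p.1 ∧
    p.1 ≠ p.2.2.1 ∧ p.2.1 ≠ p.2.2.2} / 8

/-- Number of `K₄` subgraphs of `G`, i.e. of 4-element cliques. -/
noncomputable def k4 (G : SimpleGraph V) : ℕ :=
  Nat.card {s : Finset V // G.IsNClique 4 s}

/-- Number of edges of `G`. -/
noncomputable def edgeCount (G : SimpleGraph V) : ℕ := Nat.card G.edgeSet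

/-- Degree of the vertex `v` in `G`. -/
noncomputable def deg (G : SimpleGraph V) (v : V) : ℕ := Nat.card (G.neighborSet v)

/-- Minimum degree of `G`. -/
noncomputable def minDeg (G : SimpleGraph V) : ℕ := sInf (Set.range (deg G))

/-- Maximum degree of `G`. -/
noncomputable def maxDeg (G : SimpleGraph V) : ℕ := sSup (Set.range (deg G))

/-- Clique number of `G`. -/
noncomputable def cliqueNum (G : SimpleGraph V) : ℕ :=
  sSup {n | ∃ s : Finset V, G.IsNClique n s}

/-- `G` has at least one odd cycle. -/
def HasOddCycle (G : SimpleGraph V) : Prop :=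
  ∃ (v : V) (w : G.Walk v v), w.IsCycle ∧ Odd w.length

/-- Number of triangles of `G` containing both vertices `i` and `j`
(for an edge `{i,j}`, the number of common neighbors of `i` and `j`). -/
noncomputable def c3edge (G : SimpleGraph V) (i j : V) : ℕ :=
  Nat.card {k : V // G.Adj i k ∧ G.Adj j k}

/-- Number of 4-cycles of `G` containing the edge `{i,j}`: such a cycle
`i - j - k - l - i` is determined by the ordered pair `(k,l)`. -/
noncomputable def c4edge (G : SimpleGraph V) (i j : V) : ℕ :=
  Nat.card {p : V × V // G.Adj j p.1 ∧ G.Adj p.1 p.2 ∧ G.Adj p.2 i ∧ p.1 ≠ i ∧ p.2 ≠ j}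

/-- Number of 4-cycles of `G` passing through the vertex `v`. -/
noncomputable def c4vertex (G : SimpleGraph V) (v : V) : ℕ :=
  Nat.card {p : V × V × V // G.Adj v p.1 ∧ G.Adj p.1 p.2.1 ∧ G.Adj p.2.1 p.2.2 ∧
    G.Adj p.2.2 v ∧ p.1 ≠ p.2.2 ∧ v ≠ p.2.1} / 2

abbrev OrderedFourCycle (G : SimpleGraph V) : Type _ :=
  {p : V × V × V × V //
    G.Adj p.1 p.2.1 ∧ G.Adj p.2.1 p.2.2.1 ∧ G.Adj p.2.2.1 p.2.2.2 ∧ G.Adj p.2.2.2 p.1 ∧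
    p.1 ≠ p.2.2.1 ∧ p.2.1 ≠ p.2.2.2}

theorem c4_eq_natCard_div (G : SimpleGraph V) : c4 G = Nat.card (OrderedFourCycle G) / 8 := rfl

theorem natCard_edgeSet_completeBipartiteGraph (α β : Type*) :
    Nat.card (completeBipartiteGraph α β).edgeSet = Nat.card α * Nat.card β := by
  rw [edgeSet_completeBipartiteGraph, Nat.card_range_of_injective (by grind [Function.Injective]),
    Nat.card_prod]

theorem natCard_subtype_fst_ne_snd (α : Type*) [Finite α] :
    Nat.card {p : α × α // p.1 ≠ p.2} = Nat.card α * (Nat.card α - 1) := by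
  classical
  have := Fintype.ofFinite α
  have hoff :
      (Finset.univ : Finset α).offDiag = Finset.univ.filter (fun p : α × α ↦ p.1 ≠ p.2) := by
    ext; simp
  rw [Nat.card_eq_fintype_card, Fintype.card_subtype, ← hoff, Finset.offDiag_card,
    Finset.card_univ, Nat.card_eq_fintype_card, Nat.mul_sub_one]

section CompleteBipartite

variable {α β : Type*}

def completeBipartiteFourCycle :
    ({p : α × α // p.1 ≠ p.2} × {q : β × β // q.1 ≠ q.2}) ⊕
      ({q : β × β // q.1 ≠ q.2} × {p : α × α // p.1 ≠ p.2}) →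
      OrderedFourCycle (completeBipartiteGraph α β)
  | .inl (⟨(a, c), hac⟩, ⟨(b, d), hbd⟩) =>
    ⟨(.inl a, .inr b, .inl c, .inr d), by simp [hac, hbd]⟩
  | .inr (⟨(b, d), hbd⟩, ⟨(a, c), hac⟩) =>
    ⟨(.inr b, .inl a, .inr d, .inl c), by simp [hac, hbd]⟩

theorem completeBipartiteFourCycle_bijective :
    Function.Bijective (completeBipartiteFourCycle (α := α) (β := β)) := by
  constructor
  · rintro (⟨⟨⟨_, _⟩, _⟩, ⟨⟨_, _⟩, _⟩⟩ | ⟨⟨⟨_, _⟩, _⟩, ⟨⟨_, _⟩, _⟩⟩)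
      (⟨⟨⟨_, _⟩, _⟩, ⟨⟨_, _⟩, _⟩⟩ | ⟨⟨⟨_, _⟩, _⟩, ⟨⟨_, _⟩, _⟩⟩) h <;>
      simp_all [completeBipartiteFourCycle]
  · rintro ⟨⟨a | b, x, y, z⟩, h⟩
    · rcases x with _ | b <;> rcases y with c | _ <;> rcases z with _ | d <;>
        simp at h
      exact ⟨.inl (⟨(a, c), by simpa using h.1⟩, ⟨(b, d), by simpa using h.2⟩), rfl⟩
    · rcases x with a | _ <;> rcases y with _ | d <;> rcases z with c | _ <;>
        simp at h
      exact ⟨.inr (⟨(b, d), by simpa using h.1⟩, ⟨(a, c), by simpa using h.2⟩), rfl⟩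

theorem natCard_orderedFourCycle_completeBipartiteGraph [Finite α] [Finite β] :
    Nat.card (OrderedFourCycle (completeBipartiteGraph α β)) =
      2 * (Nat.card α * (Nat.card α - 1) * (Nat.card β * (Nat.card β - 1))) := by
  rw [← Nat.card_eq_of_bijective _ completeBipartiteFourCycle_bijective, Nat.card_sum,
    Nat.card_prod, Nat.card_prod, natCard_subtype_fst_ne_snd, natCard_subtype_fst_ne_snd]
  ring

theorem c4_completeBipartiteGraph_eq [Finite α] [Finite β] :
    c4 (completeBipartiteGraph α β) = (Nat.card α).choose 2 * (Nat.card β).choose 2 := by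
  have mul_sub_one_eq (n : ℕ) : n * (n - 1) = n.choose 2 * 2 := by
    rw [Nat.choose_two_right, Nat.div_two_mul_two_of_even (Nat.even_mul_pred_self n)]
  rw [c4_eq_natCard_div, natCard_orderedFourCycle_completeBipartiteGraph, mul_sub_one_eq,
    mul_sub_one_eq, show ∀ x y : ℕ, 2 * (x * 2 * (y * 2)) = x * y * 8 by intros; ring,
    Nat.mul_div_cancel _ (by norm_num)]

end CompleteBipartite

theorem sub_one_mul_sub_two_nonneg {R : Type*} [Ring R] [LinearOrder R] [IsStrictOrderedRing R]
    (n : ℕ) : 0 ≤ ((n : R) - 1) * ((n : R) - 2) := by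
  rcases le_or_gt n 1 with hn | hn
  · have hn' : (n : R) ≤ 1 := by exact_mod_cast hn
    exact mul_nonneg_of_nonpos_of_nonpos (sub_nonpos.2 hn') (sub_nonpos.2 (hn'.trans one_le_two))
  · have hn' : (2 : R) ≤ n := by exact_mod_cast hn
    exact mul_nonneg (sub_nonneg.2 (one_le_two.trans hn')) (sub_nonneg.2 hn')

theorem cast_choose_sub_choose_mul_choose {K : Type*} [Field K] [CharZero K] {l m : ℕ}
    (hl : 1 ≤ l) (hm : 1 ≤ m) :
    ((l * m + 2 - (l + m)).choose 2 : K) - l.choose 2 * m.choose 2 =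
      ((l : K) - 1) * ((l : K) - 2) * ((m : K) - 1) * ((m : K) - 2) / 4 := by
  -- `(l - 1)(m - 1) ≥ 0`, so the natural subtraction does not truncate.
  have hle : l + m ≤ l * m + 2 := by nlinarith
  rw [Nat.cast_choose_two, Nat.cast_choose_two, Nat.cast_choose_two]
  push_cast [Nat.cast_sub hle]
  ring

theorem choose_eq_choose_mul_choose_iff {l m : ℕ} (hl : 1 ≤ l) (hm : 1 ≤ m) :
    (l * m + 2 - (l + m)).choose 2 = l.choose 2 * m.choose 2 ↔ l ≤ 2 ∨ m ≤ 2 := by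
  rw [← Nat.cast_inj (R := ℚ), Nat.cast_mul, ← sub_eq_zero,
    cast_choose_sub_choose_mul_choose hl hm]
  simp only [div_eq_zero_iff, mul_eq_zero, sub_eq_zero, OfNat.ofNat_ne_zero, or_false]
  norm_cast
  omega

/-- `c₄(K_{ℓ,m}) = C(ℓ,2)·C(m,2)`, and
`C(e-d+2,2) − C(ℓ,2)·C(m,2) = (ℓ-1)(ℓ-2)(m-1)(m-2)/4 ≥ 0`, where `d = ℓ+m`,
`e = ℓm`; equality `C(e-d+2,2) = c₄(K_{ℓ,m})` holds iff `ℓ ≤ 2` or `m ≤ 2`. -/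
theorem c4_completeBipartiteGraph (l m : ℕ) (hl : 1 ≤ l) (hm : 1 ≤ m) :
    edgeCount (completeBipartiteGraph (Fin l) (Fin m)) = l * m ∧
    c4 (completeBipartiteGraph (Fin l) (Fin m)) = Nat.choose l 2 * Nat.choose m 2 ∧
    (Nat.choose (l * m + 2 - (l + m)) 2 : ℚ) - Nat.choose l 2 * Nat.choose m 2 =
      ((l : ℚ) - 1) * ((l : ℚ) - 2) * ((m : ℚ) - 1) * ((m : ℚ) - 2) / 4 ∧
    0 ≤ ((l : ℚ) - 1) * ((l : ℚ) - 2) * ((m : ℚ) - 1) * ((m : ℚ) - 2) / 4 ∧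
    (Nat.choose (l * m + 2 - (l + m)) 2 = c4 (completeBipartiteGraph (Fin l) (Fin m)) ↔
      l ≤ 2 ∨ m ≤ 2) := by
  have hc4 : c4 (completeBipartiteGraph (Fin l) (Fin m)) = l.choose 2 * m.choose 2 := by
    simpa using c4_completeBipartiteGraph_eq (α := Fin l) (β := Fin m)
  have hnonneg :=
    mul_nonneg (sub_one_mul_sub_two_nonneg (R := ℚ) l) (sub_one_mul_sub_two_nonneg m)
  refine ⟨by simpa [edgeCount] using natCard_edgeSet_completeBipartiteGraph (Fin l) (Fin m), hc4,
    cast_choose_sub_choose_mul_choose hl hm,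
    div_nonneg (by simpa only [mul_assoc] using hnonneg) zero_le_four, ?_⟩
  rw [hc4]
  exact choose_eq_choose_mul_choose_iff hl hm
end

section
/- If G is a connected bipartite graph with d vertices and e edges, then c_4(G) ≤ e(e-d+1)/4, with equality if and only if G is a tree or a complete bipartite graph. -/
open SimpleGraph

variable {V : Type*}

/-!
Let `G` be triangle-free and `ij` an edge. The 4-cycles `i - j - k - l - i` are determined by
their edges `kl`, and deleting all these edges keeps `G` connected, since each of them is bypassed
by `k - j - i - l`. Hence `ij` lies on at most `e - d + 1` four-cycles; summing over the `2e` darts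
gives `8 c₄(G) ≤ 2e(e - d + 1)`.

In the case of equality every edge `ij` is extremal; if `e - d + 1 = 0` then `G` is a tree.
Otherwise every vertex lies on a 4-cycle, so all degrees are at least `2`. Splitting the edges into
those at `i` or `j`, those opposite to `ij` in a 4-cycle and those at the set `O` of vertices
adjacent to neither `i` nor `j` shows that `O` meets at most `|O|` edges, and counting darts then
shows that `O` is a union of components, so `O` is empty. Thus every vertex is adjacent to an end of
every edge, which for a triangle-free graph means complete bipartite. Conversely, in a complete
bipartite graph `O` is always empty and the same count shows that every edge is extremal.
-/

open Finset

lemma four_dvd_mul_mul_add_one_sub (l m : ℕ) : 4 ∣ l * m * (l * m + 1 - (l + m)) := by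
  rcases l with _ | l
  · simp
  rcases m with _ | m
  · simp
  have hk : (l + 1) * (m + 1) + 1 - (l + 1 + (m + 1)) = l * m := by
    rw [show (l + 1) * (m + 1) + 1 = l * m + (l + 1 + (m + 1)) by ring, Nat.add_sub_cancel]
  obtain ⟨a, ha⟩ := Nat.even_mul_succ_self l
  obtain ⟨b, hb⟩ := Nat.even_mul_succ_self m
  rw [hk, show (l + 1) * (m + 1) * (l * m) = l * (l + 1) * (m * (m + 1)) by ring, ha, hb]
  exact ⟨a * b, by ring⟩

namespace SimpleGraph

variable {G : SimpleGraph V}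

lemma CliqueFree.not_adj_of_adj_of_adj (hG : G.CliqueFree 3) {a b c : V}
    (hab : G.Adj a b) (hac : G.Adj a c) : ¬G.Adj b c :=
  fun hbc => by classical exact hG {a, b, c} (is3Clique_triple_iff.mpr ⟨hab, hac, hbc⟩)

lemma Reachable.mem_of_forall_adj_mem {s : Set V} (hs : ∀ v ∈ s, ∀ w, G.Adj v w → w ∈ s)
    {u v : V} (huv : G.Reachable u v) (hu : u ∈ s) : v ∈ s := by
  obtain ⟨p⟩ := huv
  induction p with
  | nil => exact hu
  | cons h _ ih => exact ih (hs _ hu _ h)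

lemma Preconnected.of_forall_adj_reachable {H : SimpleGraph V} (hG : G.Preconnected)
    (h : ∀ a b, G.Adj a b → H.Reachable a b) : H.Preconnected :=
  fun u v => (hG u v).mem_of_forall_adj_mem (s := {w | H.Reachable u w})
    (fun _ hv w hvw => hv.trans (h _ w hvw)) Reachable.rfl

lemma Iso.edgeCount_eq {W : Type*} {H : SimpleGraph W} (f : G ≃g H) :
    edgeCount G = edgeCount H :=
  Nat.card_congr f.mapEdgeSet

lemma edgeCount_completeBipartiteGraph (α β : Type*) [Fintype α] [Fintype β] :
    edgeCount (completeBipartiteGraph α β) = Fintype.card α * Fintype.card β := by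
  rw [edgeCount, Nat.card_coe_set_eq, Set.ncard_def, encard_edgeSet_completeBipartiteGraph,
    ENat.card_eq_coe_fintype_card, ENat.card_eq_coe_fintype_card, ← Nat.cast_mul,
    ENat.toNat_natCast]

lemma Iso.adj_or_adj_of_completeBipartiteGraph {α β : Type*}
    (f : G ≃g completeBipartiteGraph α β) {a b : V} (hab : G.Adj a b) (v : V) :
    G.Adj a v ∨ G.Adj b v := by
  rw [← f.map_adj_iff] at hab
  rw [← f.map_adj_iff, ← f.map_adj_iff]
  rcases ha : f a <;> rcases hb : f b <;> rcases hv : f v <;> simp_all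

def isoCompleteBipartiteGraphOfAdjIff (p : V → Prop) [DecidablePred p]
    (h : ∀ a b, G.Adj a b ↔ (p a ↔ ¬p b)) :
    G ≃g completeBipartiteGraph {v // p v} {v // ¬p v} where
  toEquiv := (Equiv.sumCompl p).symm
  map_rel_iff' {a b} := by
    by_cases ha : p a <;> by_cases hb : p b <;>
      simp [Equiv.sumCompl_symm_apply_of_pos, Equiv.sumCompl_symm_apply_of_neg, ha, hb, h]

lemma exists_iso_completeBipartiteGraph [Fintype V] (hG : G.CliqueFree 3)
    (h : ∀ a b, G.Adj a b → ∀ v, G.Adj a v ∨ G.Adj b v) :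
    ∃ l m : ℕ, Nonempty (G ≃g completeBipartiteGraph (Fin l) (Fin m)) := by
  classical
  suffices ∃ p : V → Prop, ∀ a b, G.Adj a b ↔ (p a ↔ ¬p b) by
    obtain ⟨p, hp⟩ := this
    exact ⟨_, _, ⟨(isoCompleteBipartiteGraphOfAdjIff p hp).trans
      (completeBipartiteGraphCongr (Fintype.equivFin _) (Fintype.equivFin _))⟩⟩
  by_cases hedge : ∃ i j, G.Adj i j
  · obtain ⟨i, j, hij⟩ := hedge
    refine ⟨G.Adj j, fun a b => ⟨fun hab => ?_, fun hab => ?_⟩⟩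
    · by_cases hja : G.Adj j a
      · exact iff_of_true hja fun hjb => hG.not_adj_of_adj_of_adj hja hjb hab
      · exact iff_of_false hja fun hjb => hG.not_adj_of_adj_of_adj
          ((h i j hij a).resolve_right hja) ((h i j hij b).resolve_right hjb) hab
    · by_cases hja : G.Adj j a
      · exact (h j a hja b).resolve_left (hab.mp hja)
      · have hjb : G.Adj j b := by_contra fun hjb => hja (hab.mpr hjb)
        exact ((h j b hjb a).resolve_left hja).symm
  · exact ⟨fun _ => True, fun a b => by push Not at hedge; simp [hedge a b]⟩

abbrev FourCycleTuple (G : SimpleGraph V) : Type _ :=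
  {p : V × V × V × V //
    G.Adj p.1 p.2.1 ∧ G.Adj p.2.1 p.2.2.1 ∧ G.Adj p.2.2.1 p.2.2.2 ∧ G.Adj p.2.2.2 p.1 ∧
    p.1 ≠ p.2.2.1 ∧ p.2.1 ≠ p.2.2.2}

lemma c4_eq_card_fourCycleTuple : c4 G = Nat.card G.FourCycleTuple / 8 := rfl

def fourCycleTupleEquivSigma (G : SimpleGraph V) :
    G.FourCycleTuple ≃ Σ x : G.Dart, {p : V × V // G.Adj x.snd p.1 ∧ G.Adj p.1 p.2 ∧
      G.Adj p.2 x.fst ∧ p.1 ≠ x.fst ∧ p.2 ≠ x.snd} where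
  toFun t := ⟨⟨(t.1.1, t.1.2.1), t.2.1⟩, (t.1.2.2.1, t.1.2.2.2),
    t.2.2.1, t.2.2.2.1, t.2.2.2.2.1, t.2.2.2.2.2.1.symm, t.2.2.2.2.2.2.symm⟩
  invFun x := ⟨(x.1.fst, x.1.snd, x.2.1.1, x.2.1.2),
    x.1.adj, x.2.2.1, x.2.2.2.1, x.2.2.2.2.1, x.2.2.2.2.2.1.symm, x.2.2.2.2.2.2.symm⟩
  left_inv _ := rfl
  right_inv _ := rfl

section Finite

variable [Fintype V] [DecidableRel G.Adj]

lemma edgeCount_eq_card_edgeFinset : edgeCount G = #G.edgeFinset := by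
  rw [edgeCount, Nat.card_eq_fintype_card, edgeFinset_card]

lemma two_mul_edgeCount_mul_eq_sum (n : ℕ) : 2 * edgeCount G * n = ∑ _x : G.Dart, n := by
  rw [sum_const, card_univ, dart_card_eq_twice_card_edges, edgeCount_eq_card_edgeFinset,
    smul_eq_mul]

lemma card_fourCycleTuple_eq_sum :
    Nat.card G.FourCycleTuple = ∑ x : G.Dart, c4edge G x.fst x.snd := by
  rw [Nat.card_congr G.fourCycleTupleEquivSigma, Nat.card_sigma]
  rfl

lemma two_le_degree_of_forall_c4edge_pos [Nontrivial V] (hconn : G.Connected)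
    (hpos : ∀ a b, G.Adj a b → 0 < c4edge G a b) (v : V) : 2 ≤ G.degree v := by
  obtain ⟨w, hvw⟩ := hconn.preconnected.exists_adj_of_nontrivial v
  obtain ⟨⟨⟨k, l⟩, -, -, hlv, -, hlw⟩⟩ := (Nat.card_pos_iff.mp (hpos v w hvw)).1
  rw [← card_neighborFinset_eq_degree, Nat.succ_le_iff, one_lt_card]
  exact ⟨w, (mem_neighborFinset _ _ _).mpr hvw, l, (mem_neighborFinset _ _ _).mpr hlv.symm,
    Ne.symm hlw⟩

variable [DecidableEq V] {i j : V}

def oppositeEdges (G : SimpleGraph V) [DecidableRel G.Adj] (i j : V) : Finset (Sym2 V) :=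
  image (fun p => s(p.1, p.2))
    {p : V × V | G.Adj j p.1 ∧ G.Adj p.1 p.2 ∧ G.Adj p.2 i ∧ p.1 ≠ i ∧ p.2 ≠ j}

lemma mem_oppositeEdges {x : Sym2 V} :
    x ∈ G.oppositeEdges i j ↔
      ∃ k l, (G.Adj j k ∧ G.Adj k l ∧ G.Adj l i ∧ k ≠ i ∧ l ≠ j) ∧ s(k, l) = x := by
  simp only [oppositeEdges, mem_image, mem_filter, mem_univ, true_and, Prod.exists]

lemma oppositeEdges_subset_edgeFinset (i j : V) : G.oppositeEdges i j ⊆ G.edgeFinset := by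
  intro x hx
  obtain ⟨k, l, ⟨-, hkl, -⟩, rfl⟩ := mem_oppositeEdges.mp hx
  exact mem_edgeFinset.mpr hkl

lemma notMem_of_mem_oppositeEdges {x : Sym2 V} (hx : x ∈ G.oppositeEdges i j) :
    i ∉ x ∧ j ∉ x := by
  obtain ⟨k, l, ⟨hjk, -, hli, hki, hlj⟩, rfl⟩ := mem_oppositeEdges.mp hx
  simp only [Sym2.mem_iff, not_or]
  exact ⟨⟨hki.symm, hli.ne'⟩, ⟨hjk.ne, hlj.symm⟩⟩

/-- Without triangles, a path `i - j - k - l - i` is determined by its edge `kl`. -/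
lemma card_oppositeEdges (hG : G.CliqueFree 3) (hij : G.Adj i j) :
    #(G.oppositeEdges i j) = c4edge G i j := by
  rw [oppositeEdges, card_image_of_injOn, c4edge, Nat.card_eq_fintype_card,
    Fintype.card_subtype]
  rintro ⟨k, l⟩ hkl ⟨k', l'⟩ hkl' h
  simp only [coe_filter, mem_univ, true_and, Set.mem_ofPred_eq] at hkl hkl'
  rcases Sym2.eq_iff.mp h with ⟨rfl, rfl⟩ | ⟨rfl, rfl⟩
  · rfl
  · exact (hG.not_adj_of_adj_of_adj hij.symm hkl.1 hkl'.2.2.1.symm).elim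

lemma Connected.deleteEdges_oppositeEdges (hconn : G.Connected) (hij : G.Adj i j) :
    (G.deleteEdges (G.oppositeEdges i j)).Connected := by
  set H := G.deleteEdges (G.oppositeEdges i j)
  have hH : ∀ {a b}, G.Adj a b → (a = i ∨ a = j) → H.Adj a b := fun hab hab' =>
    deleteEdges_adj.mpr ⟨hab, fun hx => by
      have := notMem_of_mem_oppositeEdges hx
      rcases hab' with rfl | rfl <;> simp_all⟩
  refine (connected_iff _).mpr ⟨hconn.preconnected.of_forall_adj_reachable fun a b hab => ?_,
    hconn.nonempty⟩
  by_cases hx : s(a, b) ∈ G.oppositeEdges i j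
  · -- the deleted edge `ab` is bypassed by `a - j - i - b` or `a - i - j - b`
    obtain ⟨k, l, ⟨hjk, -, hli, -⟩, hkl⟩ := mem_oppositeEdges.mp hx
    rcases Sym2.eq_iff.mp hkl with ⟨rfl, rfl⟩ | ⟨rfl, rfl⟩
    · exact ((hH hjk (.inr rfl)).symm.reachable.trans (hH hij.symm (.inr rfl)).reachable).trans
        (hH hli.symm (.inl rfl)).reachable
    · exact ((hH hli.symm (.inl rfl)).symm.reachable.trans (hH hij (.inl rfl)).reachable).trans
        (hH hjk (.inr rfl)).reachable
  · exact (deleteEdges_adj.mpr ⟨hab, hx⟩).reachable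

lemma c4edge_add_card_le (hconn : G.Connected) (hG : G.CliqueFree 3) (hij : G.Adj i j) :
    c4edge G i j + Fintype.card V ≤ edgeCount G + 1 := by
  have hH := (hconn.deleteEdges_oppositeEdges hij).card_vert_le_card_edgeSet_add_one
  have hS : (G.oppositeEdges i j : Set (Sym2 V)) ⊆ G.edgeSet :=
    fun x hx => mem_edgeFinset.mp (G.oppositeEdges_subset_edgeFinset i j hx)
  have hS_card := Set.ncard_le_ncard hS
  rw [edgeSet_deleteEdges, Nat.card_coe_set_eq, Set.ncard_sdiff hS, Nat.card_eq_fintype_card]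
    at hH
  rw [Set.ncard_coe_finset, card_oppositeEdges hG hij] at hH hS_card
  rw [edgeCount, Nat.card_coe_set_eq]
  omega

end Finite

section Bound

variable [Fintype V]

lemma c4edge_le (hconn : G.Connected) (hG : G.CliqueFree 3) {i j : V} (hij : G.Adj i j) :
    c4edge G i j ≤ edgeCount G + 1 - Fintype.card V := by
  classical
  have := c4edge_add_card_le hconn hG hij
  omega

lemma card_fourCycleTuple_le (hconn : G.Connected) (hG : G.CliqueFree 3) :
    Nat.card G.FourCycleTuple ≤ 2 * edgeCount G * (edgeCount G + 1 - Fintype.card V) := by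
  classical
  rw [card_fourCycleTuple_eq_sum, two_mul_edgeCount_mul_eq_sum]
  exact sum_le_sum fun x _ => c4edge_le hconn hG x.adj

lemma card_fourCycleTuple_eq_iff (hconn : G.Connected) (hG : G.CliqueFree 3) :
    Nat.card G.FourCycleTuple = 2 * edgeCount G * (edgeCount G + 1 - Fintype.card V) ↔
      ∀ a b, G.Adj a b → c4edge G a b = edgeCount G + 1 - Fintype.card V := by
  classical
  rw [card_fourCycleTuple_eq_sum, two_mul_edgeCount_mul_eq_sum,
    sum_eq_sum_iff_of_le fun x _ => c4edge_le hconn hG x.adj]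
  exact ⟨fun h a b hab => h ⟨(a, b), hab⟩ (mem_univ _), fun h x _ => h _ _ x.adj⟩

end Bound

section Equality

variable [Fintype V] [DecidableEq V] [DecidableRel G.Adj] {i j : V}

lemma card_filter_dart_fst_mem (s : Finset V) :
    #{x : G.Dart | x.fst ∈ s} = ∑ v ∈ s, G.degree v := by
  rw [card_eq_sum_card_fiberwise (s := {x : G.Dart | x.fst ∈ s}) (t := s) (f := fun x => x.fst)
    fun x hx => (mem_filter.mp hx).2]
  refine sum_congr rfl fun v hv => ?_
  rw [← dart_fst_fiber_card_eq_degree, filter_filter]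
  congr 1
  ext x
  simp only [mem_filter, mem_univ, true_and, and_iff_right_iff_imp]
  rintro rfl
  exact hv

lemma card_filter_dart_edge_mem {E : Finset (Sym2 V)} (hE : E ⊆ G.edgeFinset) :
    #{x : G.Dart | x.edge ∈ E} = 2 * #E := by
  rw [card_eq_sum_card_fiberwise (s := {x : G.Dart | x.edge ∈ E}) (t := E) (f := Dart.edge)
    fun x hx => (mem_filter.mp hx).2, mul_comm, ← smul_eq_mul, ← sum_const]
  refine sum_congr rfl fun e he => ?_
  rw [← dart_edge_fiber_card G e (mem_edgeFinset.mp (hE he)), filter_filter]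
  congr 1
  ext x
  simp only [mem_filter, mem_univ, true_and, and_iff_right_iff_imp]
  rintro rfl
  exact he

/-- The darts leaving `s` number at least `2 * #s`, while those lying on the edges at `s` number
`2 * #E ≤ 2 * #s`; so the two sets of darts coincide, and the reverse of a dart leaving `s`
leaves `s` too. -/
lemma mem_of_adj_of_card_biUnion_incidenceFinset_le {s : Finset V}
    (hdeg : ∀ v ∈ s, 2 ≤ G.degree v)
    (hcard : #(s.biUnion fun v => G.incidenceFinset v) ≤ #s)
    {v w : V} (hv : v ∈ s) (hvw : G.Adj v w) : w ∈ s := by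
  set E := s.biUnion fun v => G.incidenceFinset v
  have hE : E ⊆ G.edgeFinset := biUnion_subset.mpr fun _ _ => incidenceFinset_subset _ _
  have hdarts : ({x : G.Dart | x.fst ∈ s} : Finset G.Dart) =
      ({x : G.Dart | x.edge ∈ E} : Finset G.Dart) := by
    refine eq_of_subset_of_card_le (fun x hx => ?_) ?_
    · exact mem_filter.mpr ⟨mem_univ _, mem_biUnion.mpr ⟨x.fst, (mem_filter.mp hx).2,
        (mem_incidenceFinset _ _ _).mpr ⟨x.edge_mem, Sym2.mem_mk_left _ _⟩⟩⟩
    · rw [card_filter_dart_fst_mem, card_filter_dart_edge_mem hE]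
      calc 2 * #E ≤ ∑ _v ∈ s, 2 := by rw [sum_const, smul_eq_mul]; omega
        _ ≤ _ := sum_le_sum hdeg
  have hwv : (⟨(w, v), hvw.symm⟩ : G.Dart) ∈ ({x : G.Dart | x.edge ∈ E} : Finset G.Dart) :=
    mem_filter.mpr ⟨mem_univ _, mem_biUnion.mpr
      ⟨v, hv, (mem_incidenceFinset _ _ _).mpr ⟨hvw.symm, Sym2.mem_mk_right _ _⟩⟩⟩
  rw [← hdarts] at hwv
  exact (mem_filter.mp hwv).2

lemma card_compl_neighborFinset_union_add (hG : G.CliqueFree 3) (hij : G.Adj i j) :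
    #(G.neighborFinset i ∪ G.neighborFinset j)ᶜ + G.degree i + G.degree j = Fintype.card V := by
  have hdisj : Disjoint (G.neighborFinset i) (G.neighborFinset j) :=
    Finset.disjoint_left.mpr fun v hi hj => hG.not_adj_of_adj_of_adj hij
      (G.mem_neighborFinset i v |>.mp hi) (G.mem_neighborFinset j v |>.mp hj)
  have := card_le_univ (G.neighborFinset i ∪ G.neighborFinset j)
  rw [card_union_of_disjoint hdisj, card_neighborFinset_eq_degree,
    card_neighborFinset_eq_degree] at this
  rw [card_compl, card_union_of_disjoint hdisj, card_neighborFinset_eq_degree,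
    card_neighborFinset_eq_degree]
  omega

lemma card_incidenceFinset_union_add_one (hij : G.Adj i j) :
    #(G.incidenceFinset i ∪ G.incidenceFinset j) + 1 = G.degree i + G.degree j := by
  have hinter : G.incidenceFinset i ∩ G.incidenceFinset j = {s(i, j)} := by
    ext x
    rw [mem_inter, mem_incidenceFinset, mem_incidenceFinset, ← Set.mem_inter_iff,
      G.incidenceSet_inter_incidenceSet_of_adj hij, mem_singleton, Set.mem_singleton_iff]
  rw [← card_incidenceFinset_eq_degree, ← card_incidenceFinset_eq_degree,
    ← card_union_add_card_inter, hinter, card_singleton]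

lemma disjoint_incidenceFinset_union_oppositeEdges :
    Disjoint (G.incidenceFinset i ∪ G.incidenceFinset j) (G.oppositeEdges i j) :=
  Finset.disjoint_right.mpr fun x hx h => by
    have := notMem_of_mem_oppositeEdges hx
    rcases mem_union.mp h with h | h <;> rw [mem_incidenceFinset] at h
    exacts [this.1 h.2, this.2 h.2]

lemma disjoint_union_oppositeEdges_biUnion (hij : G.Adj i j) :
    Disjoint (G.incidenceFinset i ∪ G.incidenceFinset j ∪ G.oppositeEdges i j)
      ((G.neighborFinset i ∪ G.neighborFinset j)ᶜ.biUnion fun v => G.incidenceFinset v) := by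
  refine Finset.disjoint_right.mpr fun x hx h => ?_
  obtain ⟨v, hv, hvx⟩ := mem_biUnion.mp hx
  simp only [mem_compl, mem_union, mem_neighborFinset, not_or] at hv
  obtain ⟨hiv, hjv⟩ := hv
  rw [mem_incidenceFinset] at hvx
  rcases mem_union.mp h with h | h
  · rcases mem_union.mp h with h | h
    · exact hiv (G.adj_of_mem_incidenceSet (fun hvi => hjv (hvi ▸ hij.symm))
        ((mem_incidenceFinset _ _ _).mp h) hvx)
    · exact hjv (G.adj_of_mem_incidenceSet (fun hvj => hiv (hvj ▸ hij))
        ((mem_incidenceFinset _ _ _).mp h) hvx)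
  · obtain ⟨k, l, ⟨hjk, -, hli, -⟩, rfl⟩ := mem_oppositeEdges.mp h
    rcases Sym2.mem_iff.mp hvx.2 with rfl | rfl
    exacts [hjv hjk, hiv hli.symm]

lemma edgeFinset_subset_union_oppositeEdges_union_biUnion (hG : G.CliqueFree 3) :
    G.edgeFinset ⊆ G.incidenceFinset i ∪ G.incidenceFinset j ∪ G.oppositeEdges i j ∪
      (G.neighborFinset i ∪ G.neighborFinset j)ᶜ.biUnion fun v => G.incidenceFinset v := by
  intro x hx
  induction x using Sym2.ind with | h u w => ?_
  have huw : G.Adj u w := mem_edgeFinset.mp hx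
  by_cases hu : u ∉ G.neighborFinset i ∪ G.neighborFinset j
  · exact mem_union_right _ (mem_biUnion.mpr
      ⟨u, mem_compl.mpr hu, (mem_incidenceFinset _ _ _).mpr ⟨huw, Sym2.mem_mk_left _ _⟩⟩)
  by_cases hw : w ∉ G.neighborFinset i ∪ G.neighborFinset j
  · exact mem_union_right _ (mem_biUnion.mpr
      ⟨w, mem_compl.mpr hw, (mem_incidenceFinset _ _ _).mpr ⟨huw, Sym2.mem_mk_right _ _⟩⟩)
  refine mem_union_left _ ?_
  by_cases hi : i ∈ s(u, w)
  · exact mem_union_left _ (mem_union_left _ ((mem_incidenceFinset _ _ _).mpr ⟨huw, hi⟩))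
  by_cases hj : j ∈ s(u, w)
  · exact mem_union_left _ (mem_union_right _ ((mem_incidenceFinset _ _ _).mpr ⟨huw, hj⟩))
  -- `u` and `w` are both adjacent to `i` or `j`, and not to the same one
  refine mem_union_right _ (mem_oppositeEdges.mpr ?_)
  simp only [Sym2.mem_iff, not_or] at hi hj
  simp only [not_not, mem_union, mem_neighborFinset] at hu hw
  rcases hu with hiu | hju <;> rcases hw with hiw | hjw
  · exact (hG.not_adj_of_adj_of_adj hiu hiw huw).elim
  · exact ⟨w, u, ⟨hjw, huw.symm, hiu.symm, Ne.symm hi.2, Ne.symm hj.1⟩, Sym2.eq_swap⟩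
  · exact ⟨u, w, ⟨hju, huw, hiw.symm, Ne.symm hi.1, Ne.symm hj.2⟩, rfl⟩
  · exact (hG.not_adj_of_adj_of_adj hju hjw huw).elim

lemma edgeCount_add_one_eq (hG : G.CliqueFree 3) (hij : G.Adj i j) :
    edgeCount G + 1 = G.degree i + G.degree j + c4edge G i j +
      #((G.neighborFinset i ∪ G.neighborFinset j)ᶜ.biUnion fun v => G.incidenceFinset v) := by
  have hE1 := card_incidenceFinset_union_add_one hij
  have hcover : G.edgeFinset = _ := Subset.antisymm
    (edgeFinset_subset_union_oppositeEdges_union_biUnion hG) (union_subset (union_subset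
      (union_subset (incidenceFinset_subset _ _) (incidenceFinset_subset _ _))
      (oppositeEdges_subset_edgeFinset i j))
      (biUnion_subset.mpr fun _ _ => incidenceFinset_subset _ _))
  rw [edgeCount_eq_card_edgeFinset, hcover,
    card_union_of_disjoint (disjoint_union_oppositeEdges_biUnion hij),
    card_union_of_disjoint disjoint_incidenceFinset_union_oppositeEdges, card_oppositeEdges hG hij]
  omega

lemma adj_or_adj_of_c4edge_add_card_eq (hconn : G.Connected) (hG : G.CliqueFree 3)
    (hdeg : ∀ v, 2 ≤ G.degree v) (hij : G.Adj i j)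
    (heq : c4edge G i j + Fintype.card V = edgeCount G + 1) (v : V) : G.Adj i v ∨ G.Adj j v := by
  have hcard := edgeCount_add_one_eq hG hij
  have hO := card_compl_neighborFinset_union_add hG hij
  set O := (G.neighborFinset i ∪ G.neighborFinset j)ᶜ
  have hclosed : ∀ u ∈ O, ∀ w, G.Adj u w → w ∈ O := fun u hu w huw =>
    mem_of_adj_of_card_biUnion_incidenceFinset_le (fun x _ => hdeg x) (by omega) hu huw
  by_contra! hv
  have hi : i ∈ O := (hconn v i).mem_of_forall_adj_mem (s := O) hclosed (by simp [O, hv.1, hv.2])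
  simp only [O, mem_compl, mem_union, mem_neighborFinset, not_or] at hi
  exact hi.2 hij.symm

lemma c4edge_add_card_eq_of_adj_or_adj (hG : G.CliqueFree 3) (hij : G.Adj i j)
    (h : ∀ v, G.Adj i v ∨ G.Adj j v) : c4edge G i j + Fintype.card V = edgeCount G + 1 := by
  have hcard := edgeCount_add_one_eq hG hij
  have hO := card_compl_neighborFinset_union_add hG hij
  have hempty : (G.neighborFinset i ∪ G.neighborFinset j)ᶜ = ∅ := by
    ext v
    simpa [or_iff_not_imp_left] using h v
  rw [hempty, biUnion_empty, card_empty] at hcard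
  rw [hempty, card_empty] at hO
  omega

end Equality

lemma Connected.card_le_edgeCount_add_one [Fintype V] (hconn : G.Connected) :
    Fintype.card V ≤ edgeCount G + 1 := by
  rw [← Nat.card_eq_fintype_card]
  exact hconn.card_vert_le_card_edgeSet_add_one

lemma IsTree.edgeCount_add_one [Fintype V] (hT : G.IsTree) :
    edgeCount G + 1 = Fintype.card V := by
  rw [← Nat.card_eq_fintype_card]
  exact (isTree_iff_connected_and_card.mp hT).2

lemma isTree_or_exists_iso_of_forall_c4edge_eq [Fintype V] (hconn : G.Connected)
    (hG : G.CliqueFree 3)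
    (h : ∀ a b, G.Adj a b → c4edge G a b = edgeCount G + 1 - Fintype.card V) :
    G.IsTree ∨ ∃ l m : ℕ, Nonempty (G ≃g completeBipartiteGraph (Fin l) (Fin m)) := by
  classical
  have hde := hconn.card_le_edgeCount_add_one
  rcases Nat.eq_zero_or_pos (edgeCount G + 1 - Fintype.card V) with hk | hk
  · refine .inl (isTree_iff_connected_and_card.mpr ⟨hconn, ?_⟩)
    rw [Nat.card_eq_fintype_card (α := V)]
    exact (by omega : edgeCount G + 1 = Fintype.card V)
  obtain ⟨⟨x, hx⟩⟩ : Nonempty G.edgeSet := by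
    have : 0 < Fintype.card V := Fintype.card_pos_iff.mpr hconn.nonempty
    exact (Nat.card_pos_iff.mp (show 0 < edgeCount G by omega)).1
  induction x using Sym2.ind with | h u w => ?_
  have : Nontrivial V := ⟨u, w, hx.ne⟩
  have hdeg := two_le_degree_of_forall_c4edge_pos hconn fun a b hab => (h a b hab).symm ▸ hk
  exact .inr <| exists_iso_completeBipartiteGraph hG fun a b hab =>
    adj_or_adj_of_c4edge_add_card_eq hconn hG hdeg hab (by rw [h a b hab]; omega)

lemma forall_c4edge_eq_of_isTree_or_exists_iso [Fintype V] (hG : G.CliqueFree 3)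
    (h : G.IsTree ∨ ∃ l m : ℕ, Nonempty (G ≃g completeBipartiteGraph (Fin l) (Fin m)))
    (a b : V) (hab : G.Adj a b) : c4edge G a b = edgeCount G + 1 - Fintype.card V := by
  classical
  rcases h with hT | ⟨l, m, ⟨f⟩⟩
  · have := c4edge_add_card_le hT.1 hG hab
    have := hT.edgeCount_add_one
    omega
  · have := c4edge_add_card_eq_of_adj_or_adj hG hab (f.adj_or_adj_of_completeBipartiteGraph hab)
    omega

/-- `c4` divides by `8` with truncation, so this is needed for `c4 G` to attain
`e(e - d + 1)/4`. -/
lemma four_dvd_edgeCount_mul_of_isTree_or_exists_iso [Fintype V]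
    (h : G.IsTree ∨ ∃ l m : ℕ, Nonempty (G ≃g completeBipartiteGraph (Fin l) (Fin m))) :
    4 ∣ edgeCount G * (edgeCount G + 1 - Fintype.card V) := by
  rcases h with hT | ⟨l, m, ⟨f⟩⟩
  · simp [hT.edgeCount_add_one]
  · rw [f.edgeCount_eq, edgeCount_completeBipartiteGraph, Fintype.card_congr f.toEquiv]
    simpa using four_dvd_mul_mul_add_one_sub l m

end SimpleGraph

/-- For a connected bipartite graph `G` with `d` vertices and `e`
edges, `c₄(G) ≤ e(e-d+1)/4`, with equality iff `G` is a tree or a complete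
bipartite graph. -/
theorem c4_bipartite_le [Fintype V] (G : SimpleGraph V) (hconn : G.Connected)
    (hbip : G.Colorable 2) (d e : ℕ) (hd : d = Fintype.card V) (he : e = edgeCount G) :
    (c4 G : ℚ) ≤ (e : ℚ) * ((e : ℚ) - d + 1) / 4 ∧
    ((c4 G : ℚ) = (e : ℚ) * ((e : ℚ) - d + 1) / 4 ↔
      G.IsTree ∨ ∃ l m : ℕ, Nonempty (G ≃g completeBipartiteGraph (Fin l) (Fin m))) := by
  subst hd he
  have hG : G.CliqueFree 3 := hbip.cliqueFree (by norm_num)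
  have hde := hconn.card_le_edgeCount_add_one
  have hc4 := c4_eq_card_fourCycleTuple (G := G)
  have hN := card_fourCycleTuple_le hconn hG
  have hN_eq := card_fourCycleTuple_eq_iff hconn hG
  rw [mul_assoc] at hN hN_eq
  have hk : (edgeCount G : ℚ) * (edgeCount G - Fintype.card V + 1) / 4 =
      ((edgeCount G * (edgeCount G + 1 - Fintype.card V) : ℕ) : ℚ) / 4 := by
    push_cast [hde]
    ring
  rw [hk, le_div_iff₀ (by norm_num), eq_div_iff (by norm_num)]
  norm_cast
  refine ⟨by omega, fun h => isTree_or_exists_iso_of_forall_c4edge_eq hconn hG ?_, fun h => ?_⟩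
  · exact hN_eq.mp (by omega)
  · have := hN_eq.mpr (forall_c4edge_eq_of_isTree_or_exists_iso hG h)
    have := four_dvd_edgeCount_mul_of_isTree_or_exists_iso h
    omega
end

section
/- If G is a connected graph with d vertices and e edges containing at least one K_4, then c_4(G) < e(e-d)/4 + (3/2)·k_4(G). -/
open SimpleGraph

variable {V : Type*}

/-!
Count 4-cycles as ordered tuples: `8 c₄` is the sum, over the darts `(u, v)`, of the number
of pairs `(c, d)` closing a 4-cycle `u v c d`. Such a pair determines the partner edge `cd`, and
two pairs share a partner edge only if `{u, v, c, d}` is a `K₄`; this costs at most one pair per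
`K₄` through `uv`, hence `12 k₄` in total. The 4-cycles through `uv` with distinct partner edges
are linearly independent in the cycle space over `𝔽₂`, of dimension `e - d + 1`. A triangle has
odd length, so it lies outside the span of these even cycles: there are at most `e - d` partner
edges. On an edge of a `K₄` the two triangles over `uv` bring this down to `e - d - 1`, which
makes the final inequality strict.
-/

open Finset

theorem linearIndependent_of_apply_ne_zero {ι κ R : Type*} [Ring R] [NoZeroDivisors R]
    {v : ι → κ → R} (c : ι → κ) (hself : ∀ i, v i (c i) ≠ 0)
    (hother : ∀ i j, i ≠ j → v j (c i) = 0) : LinearIndependent R v := by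
  classical
  rw [linearIndependent_iff']
  intro s g hg i hi
  have := congrFun hg (c i)
  simp only [Finset.sum_apply, Pi.smul_apply, smul_eq_mul, Pi.zero_apply] at this
  rw [Finset.sum_eq_single_of_mem i hi fun j _ hji => by rw [hother i j hji.symm, mul_zero]]
    at this
  exact (mul_eq_zero.mp this).resolve_right (hself i)

theorem LinearIndependent.sum_elim_of_map_eq_zero {ι ι' R M N : Type*} [Ring R]
    [AddCommGroup M] [Module R M] [AddCommGroup N] [Module R N] {v : ι → M} {w : ι' → M}
    (f : M →ₗ[R] N) (hv : LinearIndependent R (f ∘ v)) (hw : LinearIndependent R w)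
    (hfw : ∀ j, f (w j) = 0) : LinearIndependent R (Sum.elim v w) :=
  (hv.of_comp f).sum_type hw <| (Submodule.range_ker_disjoint hv).mono_right <|
    Submodule.span_le.2 <| Set.range_subset_iff.2 hfw

theorem LinearIndependent.card_le_finrank_of_forall_mem {ι K M : Type*} [Fintype ι] [Field K]
    [AddCommGroup M] [Module K M] [FiniteDimensional K M] {v : ι → M}
    (hv : LinearIndependent K v) {W : Submodule K M} (hW : ∀ i, v i ∈ W) :
    Fintype.card ι ≤ Module.finrank K W :=
  (finrank_span_eq_card hv).symm.trans_le <|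
    Submodule.finrank_mono <| Submodule.span_le.2 <| Set.range_subset_iff.2 hW

theorem CharTwo.pi_single_add_self {ι R : Type*} [DecidableEq ι] [Ring R] [CharP R 2] (i : ι)
    (x : R) : (Pi.single i x : ι → R) + Pi.single i x = 0 := by
  rw [← Pi.single_add, CharTwo.add_self_eq_zero, Pi.single_zero]

namespace SimpleGraph

theorem isNClique_four_of_adj {V : Type*} [DecidableEq V] {G : SimpleGraph V} {a b c d : V}
    (hab : G.Adj a b) (hac : G.Adj a c) (had : G.Adj a d) (hbc : G.Adj b c) (hbd : G.Adj b d)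
    (hcd : G.Adj c d) : G.IsNClique 4 {a, b, c, d} :=
  (is3Clique_triple_iff.2 ⟨hbc, hbd, hcd⟩).insert <| by
    simp only [mem_insert, mem_singleton]
    rintro _ (rfl | rfl | rfl) <;> assumption

section EdgeChain

variable {V : Type*} [DecidableEq V] (G : SimpleGraph V)

def edgeChain (l : List (Sym2 V)) : G.edgeSet → ZMod 2 :=
  fun e => (l.count (e : Sym2 V) : ZMod 2)

def triChain (a b c : V) : G.edgeSet → ZMod 2 := G.edgeChain [s(a, b), s(b, c), s(c, a)]

def quadChain (a b c d : V) : G.edgeSet → ZMod 2 :=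
  G.edgeChain [s(a, b), s(b, c), s(c, d), s(d, a)]

variable {G} {a b c d : V}

@[simp]
theorem edgeChain_nil : G.edgeChain [] = 0 := rfl

theorem edgeChain_cons (h : G.Adj a b) (l : List (Sym2 V)) :
    G.edgeChain (s(a, b) :: l) = Pi.single ⟨s(a, b), h⟩ 1 + G.edgeChain l := by
  funext e
  simp only [edgeChain, List.count_cons, Pi.add_apply, Pi.single_apply, Subtype.ext_iff]
  split_ifs <;> simp_all [add_comm]

theorem triChain_apply_of_notMem {e : G.edgeSet} (ha : a ∉ (e : Sym2 V))
    (hb : b ∉ (e : Sym2 V)) : G.triChain a b c e = 0 := by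
  have h1 : s(a, b) ≠ e := fun h => ha (h ▸ Sym2.mem_mk_left _ _)
  have h2 : s(b, c) ≠ e := fun h => hb (h ▸ Sym2.mem_mk_left _ _)
  have h3 : s(c, a) ≠ e := fun h => ha (h ▸ Sym2.mem_mk_right _ _)
  simp [triChain, edgeChain, h1, h2, h3]

theorem triChain_apply_mk (hab : a ≠ b) (hcb : c ≠ b) (h : s(a, c) ∈ G.edgeSet) :
    G.triChain a b d ⟨s(a, c), h⟩ = if d = c then 1 else 0 := by
  have hac : a ≠ c := G.ne_of_adj h
  simp [triChain, edgeChain, List.count_cons, hab.symm, hcb.symm, hac]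

theorem quadChain_apply_of_notMem {e : G.edgeSet} (ha : a ∉ (e : Sym2 V))
    (hb : b ∉ (e : Sym2 V)) : G.quadChain a b c d e = if s(c, d) = e then 1 else 0 := by
  have h1 : s(a, b) ≠ e := fun h => ha (h ▸ Sym2.mem_mk_left _ _)
  have h2 : s(b, c) ≠ e := fun h => hb (h ▸ Sym2.mem_mk_left _ _)
  have h4 : s(d, a) ≠ e := fun h => ha (h ▸ Sym2.mem_mk_right _ _)
  simp [quadChain, edgeChain, List.count_cons, h1, h2, h4]

end EdgeChain

section CycleSpace

variable {V : Type*} [Fintype V] [DecidableEq V] (G : SimpleGraph V) [DecidableRel G.Adj]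

def boundary : (G.edgeSet → ZMod 2) →ₗ[ZMod 2] (V → ZMod 2) :=
  Fintype.linearCombination (ZMod 2) fun e =>
    Sym2.lift ⟨fun a b => Pi.single a 1 + Pi.single b 1, fun _ _ => add_comm _ _⟩ (e : Sym2 V)

def cycleSpace : Submodule (ZMod 2) (G.edgeSet → ZMod 2) := LinearMap.ker G.boundary

def restrictAvoiding (u v : V) : (G.edgeSet → ZMod 2) →ₗ[ZMod 2]
    ({e : G.edgeSet // u ∉ (e : Sym2 V) ∧ v ∉ (e : Sym2 V)} → ZMod 2) :=
  LinearMap.funLeft (ZMod 2) (ZMod 2) Subtype.val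

variable {G} {a b c d : V}

theorem boundary_edgeChain_edges (p : G.Walk a b) :
    G.boundary (G.edgeChain p.edges) = Pi.single a 1 + Pi.single b 1 := by
  induction p with
  | nil => rw [Walk.edges_nil, edgeChain_nil, map_zero, CharTwo.pi_single_add_self]
  | @cons a b c h p ih =>
    rw [Walk.edges_cons, edgeChain_cons h, map_add, ih, boundary,
      Fintype.linearCombination_apply_single, one_smul]
    simp only [Sym2.lift_mk]
    rw [add_assoc, ← add_assoc (Pi.single b 1), CharTwo.pi_single_add_self, zero_add]

theorem edgeChain_edges_mem_cycleSpace (p : G.Walk a a) : G.edgeChain p.edges ∈ G.cycleSpace := by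
  rw [cycleSpace, LinearMap.mem_ker, boundary_edgeChain_edges, CharTwo.pi_single_add_self]

theorem sum_edgeChain_edges (p : G.Walk a b) : ∑ e, G.edgeChain p.edges e = p.length := by
  induction p with
  | nil => simp
  | cons h p ih =>
    rw [Walk.edges_cons, edgeChain_cons h]
    simp only [Pi.add_apply, sum_add_distrib, Pi.single_apply, sum_ite_eq', mem_univ, if_true, ih,
      Walk.length_cons, Nat.cast_succ]
    ring

theorem finrank_cycleSpace_add_card_le (hconn : G.Connected) :
    Module.finrank (ZMod 2) G.cycleSpace + Fintype.card V ≤ Fintype.card G.edgeSet + 1 := by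
  obtain ⟨u⟩ := hconn.nonempty
  have htop : ⊤ ≤ LinearMap.range G.boundary ⊔ Submodule.span (ZMod 2) {Pi.single u 1} := by
    rw [← (Pi.basisFun (ZMod 2) V).span_eq, Submodule.span_le]
    rintro _ ⟨x, rfl⟩
    have hx : (Pi.single x 1 : V → ZMod 2) = (Pi.single u 1 + Pi.single x 1) + Pi.single u 1 := by
      rw [add_comm (Pi.single u 1), add_assoc, CharTwo.pi_single_add_self, add_zero]
    rw [Pi.basisFun_apply, SetLike.mem_coe, hx]
    exact Submodule.add_mem_sup ⟨_, boundary_edgeChain_edges (hconn u x).some⟩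
      (Submodule.mem_span_singleton_self _)
  have hrange : Fintype.card V ≤ Module.finrank (ZMod 2) (LinearMap.range G.boundary) + 1 :=
    calc Fintype.card V = Module.finrank (ZMod 2) (⊤ : Submodule (ZMod 2) (V → ZMod 2)) := by
          rw [finrank_top, Module.finrank_fintype_fun_eq_card]
      _ ≤ _ := Submodule.finrank_mono htop
      _ ≤ _ := Submodule.finrank_add_le_finrank_add_finrank _ _
      _ ≤ _ := by
          gcongr
          simpa using finrank_span_le_card ({Pi.single u 1} : Set (V → ZMod 2))
  have := LinearMap.finrank_range_add_finrank_ker G.boundary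
  rw [Module.finrank_fintype_fun_eq_card] at this
  rw [cycleSpace]
  omega

theorem triChain_mem_cycleSpace (hab : G.Adj a b) (hbc : G.Adj b c) (hca : G.Adj c a) :
    G.triChain a b c ∈ G.cycleSpace :=
  edgeChain_edges_mem_cycleSpace (.cons hab (.cons hbc (.cons hca .nil)))

theorem quadChain_mem_cycleSpace (hab : G.Adj a b) (hbc : G.Adj b c) (hcd : G.Adj c d)
    (hda : G.Adj d a) : G.quadChain a b c d ∈ G.cycleSpace :=
  edgeChain_edges_mem_cycleSpace (.cons hab (.cons hbc (.cons hcd (.cons hda .nil))))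

theorem sum_triChain (hab : G.Adj a b) (hbc : G.Adj b c) (hca : G.Adj c a) :
    ∑ e, G.triChain a b c e = 1 :=
  (sum_edgeChain_edges (Walk.cons hab (.cons hbc (.cons hca .nil)))).trans (by simp; rfl)

theorem sum_quadChain (hab : G.Adj a b) (hbc : G.Adj b c) (hcd : G.Adj c d)
    (hda : G.Adj d a) : ∑ e, G.quadChain a b c d e = 0 :=
  (sum_edgeChain_edges (Walk.cons hab (.cons hbc (.cons hcd (.cons hda .nil))))).trans
    (by simp; rfl)

end CycleSpace

section CyclesThroughAnEdge

variable {V : Type*} [Fintype V] [DecidableEq V] (G : SimpleGraph V) [DecidableRel G.Adj]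

def c4edgeFinset (u v : V) : Finset (V × V) :=
  univ.filter fun p => G.Adj v p.1 ∧ G.Adj p.1 p.2 ∧ G.Adj p.2 u ∧ p.1 ≠ u ∧ p.2 ≠ v

def k4edgeFinset (u v : V) : Finset (Finset V) :=
  (univ.filter (G.IsNClique 4)).filter fun t => u ∈ t ∧ v ∈ t

variable {G} {u v : V} {S : Finset (V × V)}

theorem card_c4edgeFinset (u v : V) : #(G.c4edgeFinset u v) = c4edge G u v := by
  rw [c4edge, Nat.card_eq_fintype_card, Fintype.card_subtype, c4edgeFinset]

theorem mem_c4edgeFinset {p : V × V} : p ∈ G.c4edgeFinset u v ↔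
    G.Adj v p.1 ∧ G.Adj p.1 p.2 ∧ G.Adj p.2 u ∧ p.1 ≠ u ∧ p.2 ≠ v := by
  simp [c4edgeFinset]

/-- A pair outside `S` has its swap in `S`, so together they close a `K₄` with `u` and `v`. -/
theorem card_sdiff_le_card_k4edgeFinset (huv : G.Adj u v) (hSQ : S ⊆ G.c4edgeFinset u v)
    (himg : S.image (fun p : V × V => s(p.1, p.2)) =
      (G.c4edgeFinset u v).image fun p : V × V => s(p.1, p.2)) :
    #(G.c4edgeFinset u v \ S) ≤ #(G.k4edgeFinset u v) := by
  set Q := G.c4edgeFinset u v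
  have hswap : ∀ p ∈ Q \ S, p.swap ∈ S := by
    intro p hp
    obtain ⟨hpQ, hpS⟩ := mem_sdiff.1 hp
    obtain ⟨r, hrS, hr⟩ := mem_image.1 (himg ▸ mem_image_of_mem _ hpQ)
    rcases Sym2.mk_eq_mk_iff.1 hr with rfl | rfl
    · exact absurd hrS hpS
    · exact hrS
  have hmem : ∀ p ∈ Q \ S, ∀ x,
      x ∈ s(p.1, p.2) ↔ x ∈ ({u, v, p.1, p.2} : Finset V) ∧ x ≠ u ∧ x ≠ v := by
    intro p hp x
    obtain ⟨h1, h2, h3, h4, h5⟩ := mem_c4edgeFinset.1 (mem_sdiff.1 hp).1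
    simp only [Sym2.mem_iff, mem_insert, mem_singleton]
    grind [G.ne_of_adj]
  refine card_le_card_of_injOn (fun p => {u, v, p.1, p.2}) (fun p hp => ?_)
    (fun p hp q hq hpq => ?_)
  · obtain ⟨h1, h2, h3, -⟩ := mem_c4edgeFinset.1 (mem_sdiff.1 hp).1
    obtain ⟨h1', -, h3', -⟩ := mem_c4edgeFinset.1 (hSQ (hswap p hp))
    rw [mem_coe, k4edgeFinset, mem_filter, mem_filter]
    exact ⟨⟨mem_univ _, isNClique_four_of_adj huv h3'.symm h3.symm h1 h1' h2⟩,
      by simp, by simp⟩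
  · have heq : s(p.1, p.2) = s(q.1, q.2) := Sym2.ext fun x => by
      rw [hmem p hp, hmem q hq, show ({u, v, p.1, p.2} : Finset V) = {u, v, q.1, q.2} from hpq]
    rcases Sym2.mk_eq_mk_iff.1 heq with h | rfl
    · exact h
    · exact absurd (hswap q hq) (mem_sdiff.1 hp).2

theorem exists_injOn_subset_c4edgeFinset (huv : G.Adj u v) :
    ∃ S ⊆ G.c4edgeFinset u v, Set.InjOn (fun p : V × V => s(p.1, p.2)) S ∧
      c4edge G u v ≤ #S + #(G.k4edgeFinset u v) := by
  obtain ⟨S, hSQ, hinj, himg⟩ := Finset.exists_subset_injOn_image_eq_of_surjOn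
    (f := fun p : V × V => s(p.1, p.2)) (G.c4edgeFinset u v) _
    (by rw [coe_image]; exact Set.surjOn_image _ _)
  refine ⟨S, hSQ, hinj, ?_⟩
  rw [← card_c4edgeFinset, ← card_sdiff_add_card_eq_card hSQ, add_comm]
  exact Nat.add_le_add_left (card_sdiff_le_card_k4edgeFinset huv hSQ himg) _

/-- Restricted to the edges avoiding `u` and `v`, the 4-cycle `u v p.1 p.2` is the indicator of
its partner edge `s(p.1, p.2)`. -/
theorem linearIndependent_quadChain_restrict (hS : S ⊆ G.c4edgeFinset u v)
    (hinj : Set.InjOn (fun p : V × V => s(p.1, p.2)) S) :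
    LinearIndependent (ZMod 2)
      (G.restrictAvoiding u v ∘ fun p : S => G.quadChain u v p.1.1 p.1.2) := by
  have hpartner (p : S) :
      s(p.1.1, p.1.2) ∈ G.edgeSet ∧ u ∉ s(p.1.1, p.1.2) ∧ v ∉ s(p.1.1, p.1.2) := by
    obtain ⟨h1, h2, h3, h4, h5⟩ := mem_c4edgeFinset.1 (hS p.2)
    simp only [mem_edgeSet, Sym2.mem_iff, not_or]
    exact ⟨h2, ⟨h4.symm, h3.ne'⟩, h1.ne, h5.symm⟩
  let c (p : S) : {e : G.edgeSet // u ∉ (e : Sym2 V) ∧ v ∉ (e : Sym2 V)} :=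
    ⟨⟨_, (hpartner p).1⟩, (hpartner p).2⟩
  refine linearIndependent_of_apply_ne_zero c (fun p => ?_) (fun p q hpq => ?_) <;>
    simp only [Function.comp_apply, restrictAvoiding, LinearMap.funLeft_apply]
  · rw [quadChain_apply_of_notMem (c p).2.1 (c p).2.2, if_pos rfl]
    exact one_ne_zero
  · rw [quadChain_apply_of_notMem (c p).2.1 (c p).2.2, if_neg]
    exact fun h => hpq (Subtype.ext (hinj q.2 p.2 h).symm)

theorem card_add_c3edge_le_finrank_cycleSpace (huv : G.Adj u v)
    (hS : S ⊆ G.c4edgeFinset u v) (hinj : Set.InjOn (fun p : V × V => s(p.1, p.2)) S) :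
    #S + c3edge G u v ≤ Module.finrank (ZMod 2) G.cycleSpace := by
  have htri : LinearIndependent (ZMod 2)
      fun m : {m // G.Adj u m ∧ G.Adj v m} => G.triChain u v m := by
    refine linearIndependent_of_apply_ne_zero (fun m => ⟨s(u, m), G.mem_edgeSet.2 m.2.1⟩)
      (fun m => ?_) (fun m m' hm => ?_)
    · rw [triChain_apply_mk huv.ne m.2.2.ne', if_pos rfl]
      exact one_ne_zero
    · rw [triChain_apply_mk huv.ne m.2.2.ne', if_neg (Subtype.coe_ne_coe.2 hm.symm)]
  have hli := LinearIndependent.sum_elim_of_map_eq_zero _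
    (linearIndependent_quadChain_restrict hS hinj) htri
    (fun m => funext fun e => triChain_apply_of_notMem e.2.1 e.2.2)
  have := hli.card_le_finrank_of_forall_mem (W := G.cycleSpace) <| by
    rintro (p | m)
    · obtain ⟨h1, h2, h3, -⟩ := mem_c4edgeFinset.1 (hS p.2)
      exact quadChain_mem_cycleSpace huv h1 h2 h3
    · exact triChain_mem_cycleSpace huv m.2.2 m.2.1.symm
  simpa [c3edge, Nat.card_eq_fintype_card] using this

/-- The parity of the number of edges vanishes on the 4-cycles but not on a triangle. -/
theorem card_lt_finrank_cycleSpace (huv : G.Adj u v) (hS : S ⊆ G.c4edgeFinset u v)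
    (hinj : Set.InjOn (fun p : V × V => s(p.1, p.2)) S) {x y z : V} (hxy : G.Adj x y)
    (hyz : G.Adj y z) (hzx : G.Adj z x) :
    #S < Module.finrank (ZMod 2) G.cycleSpace := by
  let parity := Fintype.linearCombination (ZMod 2) fun _ : G.edgeSet => (1 : ZMod 2)
  have hparity (f : G.edgeSet → ZMod 2) : parity f = ∑ e, f e := by
    simp [parity, Fintype.linearCombination_apply]
  have hquad := (linearIndependent_quadChain_restrict hS hinj).of_comp
  have hli := LinearIndependent.sum_elim_of_map_eq_zero (v := fun _ : Unit => G.triChain x y z)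
    parity (linearIndependent_unique_iff.2 ?_) hquad ?_
  · have := hli.card_le_finrank_of_forall_mem (W := G.cycleSpace) <| by
      rintro (_ | p)
      · exact triChain_mem_cycleSpace hxy hyz hzx
      · obtain ⟨h1, h2, h3, -⟩ := mem_c4edgeFinset.1 (hS p.2)
        exact quadChain_mem_cycleSpace huv h1 h2 h3
    rw [Fintype.card_sum, Fintype.card_unit, Fintype.card_coe] at this
    omega
  · simp [hparity, sum_triChain hxy hyz hzx]
  · intro p
    obtain ⟨h1, h2, h3, -⟩ := mem_c4edgeFinset.1 (hS p.2)
    rw [hparity, sum_quadChain huv h1 h2 h3]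

theorem c4edge_add_card_le_s5 (hconn : G.Connected) (huv : G.Adj u v) {x y z : V}
    (hxy : G.Adj x y) (hyz : G.Adj y z) (hzx : G.Adj z x) :
    c4edge G u v + Fintype.card V ≤ Fintype.card G.edgeSet + #(G.k4edgeFinset u v) := by
  obtain ⟨S, hSQ, hinj, hS⟩ := exists_injOn_subset_c4edgeFinset huv
  have := card_lt_finrank_cycleSpace huv hSQ hinj hxy hyz hzx
  have := finrank_cycleSpace_add_card_le hconn
  omega

theorem c4edge_add_card_lt (hconn : G.Connected) (huv : G.Adj u v) (h2 : 2 ≤ c3edge G u v) :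
    c4edge G u v + Fintype.card V < Fintype.card G.edgeSet + #(G.k4edgeFinset u v) := by
  obtain ⟨S, hSQ, hinj, hS⟩ := exists_injOn_subset_c4edgeFinset huv
  have := card_add_c3edge_le_finrank_cycleSpace huv hSQ hinj
  have := finrank_cycleSpace_add_card_le hconn
  omega

end CyclesThroughAnEdge

section Counting

variable {V : Type*} [Fintype V] (G : SimpleGraph V) [DecidableRel G.Adj]

theorem eight_mul_c4_le_sum_c4edge : 8 * c4 G ≤ ∑ x : G.Dart, c4edge G x.fst x.snd := by
  refine (Nat.mul_div_le _ 8).trans_eq <| (Nat.card_congr ?_).trans <|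
    Nat.card_sigma (β := fun x : G.Dart => {q : V × V //
      G.Adj x.snd q.1 ∧ G.Adj q.1 q.2 ∧ G.Adj q.2 x.fst ∧ q.1 ≠ x.fst ∧ q.2 ≠ x.snd})
  exact
    { toFun := fun p => ⟨⟨(p.1.1, p.1.2.1), p.2.1⟩, p.1.2.2, p.2.2.1, p.2.2.2.1, p.2.2.2.2.1,
        fun h => p.2.2.2.2.2.1 h.symm, fun h => p.2.2.2.2.2.2 h.symm⟩
      invFun := fun x => ⟨(x.1.fst, x.1.snd, x.2.1), x.1.adj, x.2.2.1, x.2.2.2.1, x.2.2.2.2.1,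
        fun h => x.2.2.2.2.2.1 h.symm, fun h => x.2.2.2.2.2.2 h.symm⟩
      left_inv := fun _ => rfl
      right_inv := fun _ => rfl }

variable [DecidableEq V]

theorem sum_card_k4edgeFinset_le : ∑ x : G.Dart, #(G.k4edgeFinset x.fst x.snd) ≤ 12 * k4 G := by
  simp only [k4edgeFinset, card_filter]
  rw [Finset.sum_comm]
  refine (sum_le_card_nsmul _ _ 12 fun t ht => ?_).trans_eq <| by
    rw [k4, Nat.card_eq_fintype_card, Fintype.card_subtype, smul_eq_mul, mul_comm]
  have ht4 : #t = 4 := (mem_filter.1 ht).2.2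
  rw [← card_filter]
  calc #(univ.filter fun x : G.Dart => x.fst ∈ t ∧ x.snd ∈ t)
      ≤ #t.offDiag := card_le_card_of_injOn Dart.toProd
        (fun x hx => mem_offDiag.2 ⟨(mem_filter.1 hx).2.1, (mem_filter.1 hx).2.2, x.adj.ne⟩)
        (fun x _ y _ h => Dart.toProd_injective h)
    _ = 12 := by rw [offDiag_card, ht4]

theorem eight_mul_c4_add_lt (hconn : G.Connected) (hK4 : ∃ s : Finset V, G.IsNClique 4 s) :
    8 * c4 G + 2 * Fintype.card G.edgeSet * Fintype.card V <
      2 * Fintype.card G.edgeSet * Fintype.card G.edgeSet + 12 * k4 G := by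
  obtain ⟨s, hs⟩ := hK4
  obtain ⟨a, b, c, d, hab, hac, had, hbc, hbd, hcd, rfl⟩ := card_eq_four.1 hs.2
  replace hab : G.Adj a b := hs.1 (by simp) (by simp) hab
  replace hac : G.Adj a c := hs.1 (by simp) (by simp) hac
  replace had : G.Adj a d := hs.1 (by simp) (by simp) had
  replace hbc : G.Adj b c := hs.1 (by simp) (by simp) hbc
  replace hbd : G.Adj b d := hs.1 (by simp) (by simp) hbd
  have hc3 : 2 ≤ c3edge G a b := by
    rw [c3edge, Nat.card_eq_fintype_card, Fintype.card_subtype, ← card_pair hcd]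
    refine card_le_card fun x hx => ?_
    simp only [mem_insert, mem_singleton] at hx
    rcases hx with rfl | rfl <;> simp [hac, had, hbc, hbd]
  have hlt : ∑ x : G.Dart, (c4edge G x.fst x.snd + Fintype.card V) <
      ∑ x : G.Dart, (Fintype.card G.edgeSet + #(G.k4edgeFinset x.fst x.snd)) :=
    sum_lt_sum (fun x _ => c4edge_add_card_le_s5 hconn x.adj hab hbc hac.symm)
      ⟨⟨(a, b), hab⟩, mem_univ _, c4edge_add_card_lt hconn hab hc3⟩
  rw [sum_add_distrib, sum_add_distrib, sum_const, sum_const, card_univ,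
    dart_card_eq_twice_card_edges, edgeFinset_card, smul_eq_mul, smul_eq_mul] at hlt
  have := eight_mul_c4_le_sum_c4edge G
  have := sum_card_k4edgeFinset_le G
  linarith

end Counting

end SimpleGraph

/-- For a connected graph `G` with `d` vertices and `e` edges
containing at least one `K₄`, `c₄(G) < e(e-d)/4 + (3/2)·k₄(G)`. -/
theorem c4_withK4_lt [Fintype V] (G : SimpleGraph V) (hconn : G.Connected)
    (hK4 : ∃ s : Finset V, G.IsNClique 4 s)
    (d e : ℕ) (hd : d = Fintype.card V) (he : e = edgeCount G) :
    (c4 G : ℚ) < (e : ℚ) * ((e : ℚ) - d) / 4 + 3 / 2 * k4 G := by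
  classical
  have key : ((8 * c4 G + 2 * e * d : ℕ) : ℚ) < ((2 * e * e + 12 * k4 G : ℕ) : ℚ) := by
    rw [hd, he, edgeCount, Nat.card_eq_fintype_card]
    exact_mod_cast G.eight_mul_c4_add_lt hconn hK4
  push_cast at key
  linarith
end

section
/- Every connected bipartite graph G with d vertices and e edges satisfies c_4(G) ≤ C(e-d+2, 2). -/
open SimpleGraph

variable {V : Type*}

/-!
Induct on the number of edges. If the edge `uv` lies on a 4-cycle, deleting it keeps `G`
connected and destroys exactly the 4-cycles through `uv`; as vertex tuples these number `8 t`,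
where `t` counts the 4-cycles `u — v — x — y — u`. Deleting the `t` opposite edges `xy` also
keeps `G` connected (each is bypassed by `x — v — u — y`), and since `G` is bipartite these
edges are distinct, so `t ≤ e - d + 1`. Hence `c₄(G) ≤ C(e-d+1, 2) + (e-d+1) = C(e-d+2, 2)`.
-/

namespace SimpleGraph

lemma Preconnected.of_adj_imp_reachable {G H : SimpleGraph V} (hG : G.Preconnected)
    (h : ∀ ⦃x y⦄, G.Adj x y → H.Reachable x y) : H.Preconnected := fun x y =>
  (reachable_iff_reflTransGen x y).2 <|
    Relation.reflTransGen_closed (fun a b hab => (reachable_iff_reflTransGen a b).1 (h hab))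
      x y ((reachable_iff_reflTransGen x y).1 (hG x y))

lemma Connected.deleteEdges_of_forall_reachable {G : SimpleGraph V} {s : Set (Sym2 V)}
    (hG : G.Connected)
    (h : ∀ ⦃x y⦄, G.Adj x y → s(x, y) ∈ s → (G.deleteEdges s).Reachable x y) :
    (G.deleteEdges s).Connected := by
  have := hG.nonempty
  refine ⟨hG.preconnected.of_adj_imp_reachable fun x y hxy => ?_⟩
  by_cases hs : s(x, y) ∈ s
  · exact h hxy hs
  · exact (deleteEdges_adj.2 ⟨hxy, hs⟩).reachable

/-- Indexing by `Fin 4` makes the rotations and reflections of a 4-cycle the maps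
`i ↦ i + k` and `i ↦ k - i`. -/
def IsFourCycle (G : SimpleGraph V) (p : Fin 4 → V) : Prop :=
  ∀ i, G.Adj (p i) (p (i + 1)) ∧ p i ≠ p (i + 2)

def fourCycles (G : SimpleGraph V) : Set (Fin 4 → V) := {p | G.IsFourCycle p}

def fourCyclesFrom (G : SimpleGraph V) (u v : V) : Set (Fin 4 → V) :=
  {p | G.IsFourCycle p ∧ p 0 = u ∧ p 1 = v}

def fourCycleOppositeEdges (G : SimpleGraph V) (u v : V) : Set (Sym2 V) :=
  (fun p : Fin 4 → V => s(p 2, p 3)) '' G.fourCyclesFrom u v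

variable {G : SimpleGraph V} {p : Fin 4 → V} {s : Set (Sym2 V)}

lemma IsFourCycle.rotate (hp : G.IsFourCycle p) (k : Fin 4) :
    G.IsFourCycle fun i => p (i + k) := fun i => by
  simpa only [add_right_comm i 1 k, add_right_comm i 2 k] using hp (i + k)

lemma IsFourCycle.reflect (hp : G.IsFourCycle p) (k : Fin 4) :
    G.IsFourCycle fun i => p (k - i) := fun i => by
  constructor
  · simpa only [sub_add_eq_sub_sub, sub_add_cancel] using (hp (k - (i + 1))).1.symm
  · simpa only [sub_add_eq_sub_sub, sub_add_cancel] using (hp (k - (i + 2))).2.symm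

lemma IsFourCycle.exists_edge_mem_of_not_deleteEdges (hp : G.IsFourCycle p)
    (hp' : ¬(G.deleteEdges s).IsFourCycle p) : ∃ i, s(p i, p (i + 1)) ∈ s := by
  by_contra! h
  exact hp' fun i => ⟨deleteEdges_adj.2 ⟨(hp i).1, h i⟩, (hp i).2⟩

lemma IsFourCycle.color_add_two (hp : G.IsFourCycle p) (C : G.Coloring (Fin 2)) (i : Fin 4) :
    C (p (i + 2)) = C (p i) := by
  have h₁ := C.valid (hp i).1
  have h₂ := C.valid (hp (i + 1)).1
  rw [add_assoc, show (1 : Fin 4) + 1 = 2 from rfl] at h₂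
  omega

lemma Connected.deleteEdges_of_isFourCycle (hG : G.Connected) (hp : G.IsFourCycle p) :
    (G.deleteEdges {s(p 0, p 1)}).Connected := by
  have hkept {a b : V} (hab : G.Adj a b) (hne : s(a, b) ≠ s(p 0, p 1)) :
      (G.deleteEdges {s(p 0, p 1)}).Adj a b := deleteEdges_adj.2 ⟨hab, hne⟩
  have h₀₁ : p 0 ≠ p 1 := (hp 0).1.ne
  have h₂₁ : p 2 ≠ p 1 := (hp 1).1.ne.symm
  have h₃₀ : p 3 ≠ p 0 := (hp 3).1.ne
  have h₂₀ : p 2 ≠ p 0 := (hp 0).2.symm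
  have h₃₁ : p 3 ≠ p 1 := (hp 1).2.symm
  have hreach : (G.deleteEdges {s(p 0, p 1)}).Reachable (p 0) (p 1) := by
    refine (hkept (hp 3).1.symm ?_).reachable.trans <|
      (hkept (hp 2).1.symm ?_).reachable.trans (hkept (hp 1).1.symm ?_).reachable <;>
      simp [h₀₁, h₀₁.symm, h₂₁, h₃₀, h₂₀, h₃₁]
  refine hG.deleteEdges_of_forall_reachable fun x y _ hxy => ?_
  rcases Sym2.eq_iff.1 (Set.mem_singleton_iff.1 hxy) with ⟨rfl, rfl⟩ | ⟨rfl, rfl⟩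
  · exact hreach
  · exact hreach.symm

lemma fourCycles_sdiff_deleteEdges_subset (u v : V) :
    G.fourCycles \ (G.deleteEdges {s(u, v)}).fourCycles ⊆
      (fun x : (Fin 4 → V) × Fin 4 => fun j => x.1 (j - x.2)) ''
          (G.fourCyclesFrom u v ×ˢ .univ) ∪
        (fun x : (Fin 4 → V) × Fin 4 => fun j => x.1 (x.2 - j)) ''
          (G.fourCyclesFrom u v ×ˢ .univ) := by
  rintro p ⟨hp, hp'⟩
  obtain ⟨i, hi⟩ := IsFourCycle.exists_edge_mem_of_not_deleteEdges hp hp'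
  rw [Set.mem_singleton_iff, Sym2.eq_iff] at hi
  rcases hi with ⟨rfl, rfl⟩ | ⟨rfl, rfl⟩
  · refine .inl ⟨(fun j => p (j + i), i), ⟨?_, trivial⟩, by simp⟩
    exact ⟨hp.rotate i, by simp, by simp [add_comm]⟩
  · refine .inr ⟨(fun j => p (i + 1 - j), i + 1), ⟨?_, trivial⟩, by simp⟩
    exact ⟨hp.reflect _, by simp, by simp⟩

lemma ncard_fourCycles_le_ncard_deleteEdges_add [Finite V] (u v : V) :
    G.fourCycles.ncard ≤
      (G.deleteEdges {s(u, v)}).fourCycles.ncard + 8 * (G.fourCyclesFrom u v).ncard := by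
  have hrot := (G.fourCyclesFrom u v ×ˢ (.univ : Set (Fin 4))).ncard_image_le
    (f := fun x => fun j => x.1 (j - x.2))
  have href := (G.fourCyclesFrom u v ×ˢ (.univ : Set (Fin 4))).ncard_image_le
    (f := fun x => fun j => x.1 (x.2 - j))
  rw [Set.ncard_prod, Set.ncard_univ, Nat.card_eq_fintype_card, Fintype.card_fin] at hrot href
  calc G.fourCycles.ncard
      ≤ (G.fourCycles \ (G.deleteEdges {s(u, v)}).fourCycles).ncard +
          (G.deleteEdges {s(u, v)}).fourCycles.ncard := Set.ncard_le_ncard_sdiff_add_ncard _ _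
    _ ≤ _ := by
      grw [Set.ncard_le_ncard (fourCycles_sdiff_deleteEdges_subset u v), Set.ncard_union_le]
      omega

lemma injOn_fourCyclesFrom_oppositeEdge (hG : G.Colorable 2) (u v : V) :
    Set.InjOn (fun p : Fin 4 → V => s(p 2, p 3)) (G.fourCyclesFrom u v) := by
  obtain ⟨C⟩ := hG
  rintro p ⟨hp, rfl, rfl⟩ q ⟨hq, hq₀, hq₁⟩ hpq
  rcases Sym2.eq_iff.1 hpq with ⟨h₂, h₃⟩ | ⟨h₂, h₃⟩
  · funext i
    fin_cases i <;> simp_all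
  · have hp₂ : C (p 2) = C (p 0) := hp.color_add_two C 0
    have hq₃ : C (q 3) ≠ C (q 0) := C.valid (hq 3).1
    rw [h₂, ← h₃, hq₀] at *
    exact (hq₃ hp₂).elim

lemma notMem_oppositeEdge_of_mem_fourCyclesFrom {u v : V} (hp : p ∈ G.fourCyclesFrom u v) :
    u ∉ s(p 2, p 3) ∧ v ∉ s(p 2, p 3) := by
  obtain ⟨hp, rfl, rfl⟩ := hp
  simp only [Sym2.mem_iff, not_or]
  exact ⟨⟨(hp 0).2, (hp 3).1.ne.symm⟩, ⟨(hp 1).1.ne, (hp 1).2⟩⟩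

lemma Connected.deleteEdges_fourCycleOppositeEdges (hG : G.Connected) (u v : V) :
    (G.deleteEdges (G.fourCycleOppositeEdges u v)).Connected := by
  set G' := G.deleteEdges (G.fourCycleOppositeEdges u v)
  have hkept : ∀ a b, G.Adj a b → (u = a ∨ v = a) → G'.Adj a b := by
    rintro a b hab hua
    refine deleteEdges_adj.2 ⟨hab, ?_⟩
    rintro ⟨q, hq, hqab⟩
    have hq := notMem_oppositeEdge_of_mem_fourCyclesFrom hq
    rw [show s(q 2, q 3) = s(a, b) from hqab] at hq
    rcases hua with rfl | rfl
    · exact hq.1 (Sym2.mem_mk_left _ _)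
    · exact hq.2 (Sym2.mem_mk_left _ _)
  refine hG.deleteEdges_of_forall_reachable ?_
  rintro x y - ⟨p, hp, hxy⟩
  have hreach : G'.Reachable (p 2) (p 3) := by
    obtain ⟨hp, rfl, rfl⟩ := hp
    exact (hkept _ _ (hp 1).1 (.inr rfl)).symm.reachable.trans <|
      (hkept _ _ (hp 0).1 (.inl rfl)).symm.reachable.trans
      (hkept _ _ (hp 3).1.symm (.inl rfl)).reachable
  rcases Sym2.eq_iff.1 hxy with ⟨rfl, rfl⟩ | ⟨rfl, rfl⟩
  · exact hreach
  · exact hreach.symm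

lemma Connected.ncard_fourCyclesFrom_add_card_le [Finite V] (hG : G.Connected)
    (hbip : G.Colorable 2) (u v : V) :
    (G.fourCyclesFrom u v).ncard + Nat.card V ≤ G.edgeSet.ncard + 1 := by
  have hsub : G.fourCycleOppositeEdges u v ⊆ G.edgeSet := by
    rintro _ ⟨p, hp, rfl⟩
    exact (hp.1 2).1
  have hcard := (hG.deleteEdges_fourCycleOppositeEdges u v).card_vert_le_card_edgeSet_add_one
  rw [edgeSet_deleteEdges, Nat.card_coe_set_eq, Set.ncard_sdiff hsub] at hcard
  rw [← (injOn_fourCyclesFrom_oppositeEdge hbip u v).ncard_image]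
  have := Set.ncard_le_ncard hsub
  unfold fourCycleOppositeEdges at *
  omega

lemma Connected.ncard_fourCycles_le [Finite V] (hG : G.Connected) (hbip : G.Colorable 2) :
    G.fourCycles.ncard ≤ 8 * (G.edgeSet.ncard + 2 - Nat.card V).choose 2 := by
  induction hn : G.edgeSet.ncard using Nat.strong_induction_on generalizing G with
  | _ n ih =>
  obtain hempty | ⟨p, hp⟩ := G.fourCycles.eq_empty_or_nonempty
  · simp [hempty]
  have huv : s(p 0, p 1) ∈ G.edgeSet := (hp 0).1
  have hn' : (G.deleteEdges {s(p 0, p 1)}).edgeSet.ncard = n - 1 := by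
    rw [edgeSet_deleteEdges, Set.ncard_sdiff_singleton_of_mem huv, hn]
  have hn₀ : 0 < n := hn ▸ (Set.ncard_pos (Set.toFinite _)).2 ⟨_, huv⟩
  have hrest := ih (n - 1) (by omega) (hG.deleteEdges_of_isFourCycle hp)
    (hbip.mono_left (deleteEdges_le _)) hn'
  have hsplit := G.ncard_fourCycles_le_ncard_deleteEdges_add (p 0) (p 1)
  have hfrom := hG.ncard_fourCyclesFrom_add_card_le hbip (p 0) (p 1)
  obtain ⟨m, hm⟩ : ∃ m, n + 1 = Nat.card V + m := ⟨n + 1 - Nat.card V, by omega⟩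
  have hchoose : (m + 1).choose 2 = m.choose 2 + m := by
    rw [Nat.choose_succ_succ', Nat.choose_one_right, add_comm]
  rw [show n - 1 + 2 - Nat.card V = m by omega] at hrest
  rw [show n + 2 - Nat.card V = m + 1 by omega, hchoose]
  omega

end SimpleGraph

lemma c4_eq_ncard_fourCycles_div (G : SimpleGraph V) : c4 G = G.fourCycles.ncard / 8 := by
  let e : (V × V × V × V) ≃ (Fin 4 → V) :=
    { toFun := fun p => ![p.1, p.2.1, p.2.2.1, p.2.2.2]
      invFun := fun p => (p 0, p 1, p 2, p 3)
      left_inv := fun _ => rfl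
      right_inv := fun p => by ext i; fin_cases i <;> rfl }
  rw [c4, ← Nat.card_coe_set_eq]
  congr 1
  refine Nat.card_congr (e.subtypeEquiv fun p => ?_)
  obtain ⟨a, b, c, d⟩ := p
  change _ ↔ G.IsFourCycle ![a, b, c, d]
  simp [IsFourCycle, Fin.forall_fin_succ, eq_comm (a := c), eq_comm (a := d)]
  tauto

/-- Every connected bipartite graph `G` with `d` vertices and `e`
edges satisfies `c₄(G) ≤ C(e-d+2, 2)`. -/
theorem c4_bipartite_binom [Fintype V] (G : SimpleGraph V) (hconn : G.Connected)
    (hbip : G.Colorable 2) (d e : ℕ) (hd : d = Fintype.card V) (he : e = edgeCount G) :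
    c4 G ≤ Nat.choose (e + 2 - d) 2 := by
  rw [c4_eq_ncard_fourCycles_div, hd, he, edgeCount, Nat.card_coe_set_eq,
    Fintype.card_eq_nat_card]
  exact Nat.div_le_of_le_mul (hconn.ncard_fourCycles_le hbip)
end

section
/- Let G be a connected graph on d ≥ 4 vertices containing K_{d-1} as a subgraph, with e = C(d-1,2) + k edges where 1 ≤ k ≤ d-2. Then C(e-d+1,2) − c_4(G) = (d-4)(k-1)(d-1-k)/2 ≥ 0; in particular c_4(G) ≤ C(e-d+1,2), with equality if and only if d = 4 or k = 1. -/
open SimpleGraph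

variable {V : Type*}

/-!
A clique on all but one vertex leaves a single vertex `v` outside it, so `G` is `K_{d-1}` plus `v`
joined to `deg v` of its vertices, and the degree sum gives `deg v = k`. Splitting a 4-cycle
`a b c d` into its diagonals `(a, c)` and `(b, d)` shows `8 c₄(G) = ∑_{a ≠ c} m (m - 1)`, where
`m = m(a, c)` is the number of common neighbours. Here `m` is `d - 2` or `d - 3` when `a, c ≠ v`,
and `k - 1` or `k` when `a = v`; summing gives `c₄(G) = 3 C(d-1,4) + (d-3) C(k,2)`, and the rest
is algebra.
-/

open Finset

theorem Finset.cast_card_offDiag {α R : Type*} [DecidableEq α] [Ring R] (s : Finset α) :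
    (#s.offDiag : R) = #s * (#s - 1) := by
  rw [offDiag_card, Nat.cast_sub (Nat.le_mul_self _)]
  push_cast
  rw [mul_sub_one]

theorem Finset.sum_ite_const {α R : Type*} [Ring R] (s : Finset α) (p : α → Prop)
    [DecidablePred p] (a b : R) :
    ∑ x ∈ s, (if p x then a else b) = #{x ∈ s | p x} * a + (#s - #{x ∈ s | p x}) * b := by
  rw [sum_ite, sum_const, sum_const, nsmul_eq_mul, nsmul_eq_mul,
    ← card_filter_add_card_filter_not (s := s) p, Nat.cast_add, add_sub_cancel_left]

theorem Nat.cast_choose_four {K : Type*} [Field K] [CharZero K] (a : ℕ) :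
    (a.choose 4 : K) = a * (a - 1) * (a - 2) * (a - 3) / 24 := by
  rcases lt_or_ge a 3 with ha | ha
  · interval_cases a <;> simp [Nat.choose_eq_zero_of_lt]
  have h := congrArg (Nat.cast (R := K)) (Nat.descFactorial_eq_factorial_mul_choose a 4)
  simp only [Nat.cast_descFactorial, ascPochhammer_succ_eval, ascPochhammer_zero,
    Polynomial.eval_one, Nat.factorial, Nat.cast_mul, Nat.cast_sub ha] at h
  rw [eq_div_iff (by norm_num)]
  push_cast at h
  linear_combination -h

namespace SimpleGraph

variable [Fintype V] [DecidableEq V] (G : SimpleGraph V)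

theorem IsNClique.exists_isClique_compl_singleton [Nonempty V] {s : Finset V}
    (hs : G.IsNClique (Fintype.card V - 1) s) : ∃ v, G.IsClique ({v}ᶜ : Set V) := by
  have hcard : #sᶜ = 1 := by
    rw [card_compl, hs.card_eq]
    have := Fintype.card_pos (α := V)
    omega
  obtain ⟨v, hv⟩ := card_eq_one.1 hcard
  refine ⟨v, hs.isClique.subset fun x hx => ?_⟩
  by_contra hxs
  exact hx (mem_singleton.1 (hv ▸ mem_compl.2 hxs))

variable [DecidableRel G.Adj]

def c4Tuples : Finset (V × V × V × V) :=
  {p | G.Adj p.1 p.2.1 ∧ G.Adj p.2.1 p.2.2.1 ∧ G.Adj p.2.2.1 p.2.2.2 ∧ G.Adj p.2.2.2 p.1 ∧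
    p.1 ≠ p.2.2.1 ∧ p.2.1 ≠ p.2.2.2}

theorem c4_eq_card_c4Tuples_div_eight : c4 G = #G.c4Tuples / 8 := by
  rw [c4, Nat.card_eq_fintype_card, Fintype.card_subtype, c4Tuples]

theorem card_c4Tuples_eq_sum_offDiag :
    #G.c4Tuples = ∑ q ∈ (univ : Finset V).offDiag,
      #(G.neighborFinset q.1 ∩ G.neighborFinset q.2).offDiag := by
  rw [← card_sigma]
  refine card_nbij' (fun p => ⟨(p.1, p.2.2.1), (p.2.1, p.2.2.2)⟩)
    (fun x => (x.1.1, x.2.1, x.1.2, x.2.2)) ?_ ?_ (fun _ _ => rfl) (fun _ _ => rfl)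
  all_goals
    intro x
    simp only [c4Tuples, coe_filter, mem_univ, true_and, Set.mem_ofPred_eq, coe_sigma,
      Set.mem_sigma_iff, mem_coe, mem_offDiag, mem_inter, mem_neighborFinset]
    grind [adj_comm]

namespace IsClique

variable {G} {v : V} (hG : G.IsClique ({v}ᶜ : Set V))
include hG

theorem neighborFinset_eq_of_ne {x : V} (hx : x ≠ v) :
    G.neighborFinset x = if G.Adj v x then {x}ᶜ else {x, v}ᶜ := by
  ext y
  by_cases hy : y = v
  · subst hy; split_ifs with h <;> simp [h, G.adj_comm x, hx.symm]
  · by_cases hyx : y = x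
    · subst hyx; split_ifs <;> simp
    · have := hG hx hy (Ne.symm hyx)
      split_ifs <;> simp [*]

theorem degree_eq_of_ne {x : V} (hx : x ≠ v) :
    G.degree x = Fintype.card V - 2 + if G.Adj v x then 1 else 0 := by
  have hxv : #{x, v} = 2 := card_pair hx
  have := card_le_univ {x, v}
  rw [← card_neighborFinset_eq_degree, neighborFinset_eq_of_ne hG hx]
  split_ifs <;> simp only [card_compl, card_singleton, hxv] <;> omega

theorem card_edgeFinset_eq_choose_add_degree :
    #G.edgeFinset = (Fintype.card V - 1).choose 2 + G.degree v := by
  have hchoose :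
      2 * (Fintype.card V - 1).choose 2 = (Fintype.card V - 1) * (Fintype.card V - 2) := by
    rw [Nat.choose_two_right, Nat.mul_div_cancel' (Nat.even_mul_pred_self _).two_dvd, Nat.sub_sub]
  suffices 2 * #G.edgeFinset = (Fintype.card V - 1) * (Fintype.card V - 2) + 2 * G.degree v by
    omega
  have hN : ({x ∈ univ.erase v | G.Adj v x} : Finset V) = G.neighborFinset v := by
    ext x; simpa using fun h : G.Adj v x => h.ne'
  rw [← sum_degrees_eq_twice_card_edges, ← add_sum_erase _ _ (mem_univ v),
    sum_congr rfl fun x hx => degree_eq_of_ne hG (ne_of_mem_erase hx), sum_add_distrib,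
    sum_const, sum_boole, hN, card_neighborFinset_eq_degree, card_erase_of_mem (mem_univ v),
    card_univ, smul_eq_mul, Nat.cast_id]
  ring

theorem neighborFinset_inter_eq_erase (c : V) :
    G.neighborFinset v ∩ G.neighborFinset c = (G.neighborFinset v).erase c := by
  ext b
  simp only [mem_inter, mem_erase, mem_neighborFinset]
  constructor
  · rintro ⟨hb, hcb⟩
    exact ⟨hcb.ne', hb⟩
  · rintro ⟨hbc, hb⟩
    refine ⟨hb, ?_⟩
    by_cases hc : c = v
    · exact hc ▸ hb
    · exact hG hc hb.ne' hbc.symm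

theorem neighborFinset_inter_eq_of_ne {a c : V} (ha : a ≠ v) (hc : c ≠ v) :
    G.neighborFinset a ∩ G.neighborFinset c =
      if G.Adj v a ∧ G.Adj v c then {a, c}ᶜ else {v, a, c}ᶜ := by
  rw [neighborFinset_eq_of_ne hG ha, neighborFinset_eq_of_ne hG hc]
  ext b
  split_ifs <;> simp only [mem_inter, mem_compl, mem_insert, mem_singleton] <;> tauto

theorem sum_offDiag_erase_card_offDiag_inter :
    (∑ q ∈ (univ.erase v).offDiag, #(G.neighborFinset q.1 ∩ G.neighborFinset q.2).offDiag : ℚ) =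
      (Fintype.card V - 1) * (Fintype.card V - 2) * (Fintype.card V - 3) * (Fintype.card V - 4) +
        2 * G.degree v * (G.degree v - 1) * (Fintype.card V - 3) := by
  have hcompl (t : Finset V) : (#tᶜ : ℚ) = Fintype.card V - #t := by
    rw [card_compl, Nat.cast_sub (card_le_univ t)]
  have hfilter : {q ∈ (univ.erase v).offDiag | G.Adj v q.1 ∧ G.Adj v q.2} =
      (G.neighborFinset v).offDiag := by
    ext ⟨a, c⟩
    simp only [mem_filter, mem_offDiag, mem_erase, mem_univ, mem_neighborFinset]
    grind [Adj.ne']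
  have hsummand : ∀ q ∈ (univ.erase v).offDiag,
      (#(G.neighborFinset q.1 ∩ G.neighborFinset q.2).offDiag : ℚ) =
        if G.Adj v q.1 ∧ G.Adj v q.2 then ((Fintype.card V : ℚ) - 2) * (Fintype.card V - 3)
        else ((Fintype.card V : ℚ) - 3) * (Fintype.card V - 4) := by
    intro q hq
    obtain ⟨ha, hc, hac⟩ := mem_offDiag.1 hq
    rw [cast_card_offDiag, neighborFinset_inter_eq_of_ne hG (ne_of_mem_erase ha)
      (ne_of_mem_erase hc)]
    split_ifs
    · rw [hcompl, card_pair hac]; ring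
    · rw [hcompl, card_insert_of_notMem, card_pair hac]
      · push_cast; ring
      · simp [Ne.symm (ne_of_mem_erase ha), Ne.symm (ne_of_mem_erase hc)]
  rw [sum_congr rfl hsummand, sum_ite_const, hfilter, cast_card_offDiag,
    cast_card_offDiag, card_neighborFinset_eq_degree,
    cast_card_erase_of_mem (mem_univ v), card_univ]
  ring

theorem sum_erase_card_offDiag_inter :
    (∑ c ∈ univ.erase v, #(G.neighborFinset v ∩ G.neighborFinset c).offDiag : ℚ) =
      G.degree v * (G.degree v - 1) * (Fintype.card V - 3) := by
  have hsummand : ∀ c ∈ univ.erase v,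
      (#(G.neighborFinset v ∩ G.neighborFinset c).offDiag : ℚ) =
        if G.Adj v c then ((G.degree v : ℚ) - 1) * (G.degree v - 2)
        else (G.degree v : ℚ) * (G.degree v - 1) := by
    intro c _
    rw [cast_card_offDiag, neighborFinset_inter_eq_erase hG, ← card_neighborFinset_eq_degree]
    split_ifs with h
    · rw [cast_card_erase_of_mem ((G.mem_neighborFinset v c).2 h)]; ring
    · rw [erase_eq_of_notMem (by simpa using h)]
  have hfilter : {c ∈ univ.erase v | G.Adj v c} = G.neighborFinset v := by
    ext c
    simpa using Adj.ne'
  rw [sum_congr rfl hsummand, sum_ite_const, hfilter, card_neighborFinset_eq_degree,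
    cast_card_erase_of_mem (mem_univ v), card_univ]
  ring

theorem cast_card_c4Tuples :
    (#G.c4Tuples : ℚ) = (Fintype.card V - 1) * (Fintype.card V - 2) * (Fintype.card V - 3) *
      (Fintype.card V - 4) + 4 * G.degree v * (G.degree v - 1) * (Fintype.card V - 3) := by
  have hv : v ∉ univ.erase v := notMem_erase v univ
  have hdisj :
      Disjoint ((univ.erase v).offDiag ∪ {v} ×ˢ univ.erase v) (univ.erase v ×ˢ {v}) := by
    simp only [Finset.disjoint_left, mem_union, mem_offDiag, mem_product, mem_singleton]
    grind
  have hdisj' : Disjoint (univ.erase v).offDiag ({v} ×ˢ univ.erase v) :=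
    Finset.disjoint_left.2 fun q hq hq' =>
      hv (mem_singleton.1 (mem_product.1 hq').1 ▸ (mem_offDiag.1 hq).1)
  rw [card_c4Tuples_eq_sum_offDiag, ← insert_erase (mem_univ v), offDiag_insert hv,
    sum_union hdisj, sum_union hdisj', singleton_product, product_singleton, sum_map, sum_map]
  push_cast
  simp only [Function.Embedding.coeFn_mk, inter_comm (G.neighborFinset _) (G.neighborFinset v)]
  rw [sum_offDiag_erase_card_offDiag_inter hG, sum_erase_card_offDiag_inter hG]
  ring

theorem c4_eq_choose_add_choose (h3 : 3 ≤ Fintype.card V) :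
    c4 G = 3 * (Fintype.card V - 1).choose 4 + (Fintype.card V - 3) * (G.degree v).choose 2 := by
  have hcard : #G.c4Tuples =
      8 * (3 * (Fintype.card V - 1).choose 4 + (Fintype.card V - 3) * (G.degree v).choose 2) := by
    rw [← Nat.cast_inj (R := ℚ), hG.cast_card_c4Tuples]
    push_cast [Nat.cast_sub h3, Nat.cast_sub (by omega : 1 ≤ Fintype.card V),
      Nat.cast_choose_four, Nat.cast_choose_two]
    ring
  rw [c4_eq_card_c4Tuples_div_eight, hcard, Nat.mul_div_cancel_left _ (by norm_num)]

end IsClique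

end SimpleGraph

theorem cast_choose_sub_c4_formula (d k : ℕ) (hd : 4 ≤ d) :
    (((d - 1).choose 2 + k + 1 - d).choose 2 : ℚ) -
        (3 * (d - 1).choose 4 + (d - 3) * k.choose 2 : ℕ) =
      ((d : ℚ) - 4) * ((k : ℚ) - 1) * ((d : ℚ) - 1 - k) / 2 := by
  have hchoose : d - 1 ≤ (d - 1).choose 2 := by
    rw [Nat.choose_two_right, Nat.le_div_iff_mul_le two_pos]
    exact Nat.mul_le_mul_left _ (by omega)
  push_cast [Nat.cast_sub (by omega : d ≤ (d - 1).choose 2 + k + 1),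
    Nat.cast_sub (by omega : 3 ≤ d), Nat.cast_sub (by omega : 1 ≤ d), Nat.cast_choose_four,
    Nat.cast_choose_two]
  ring

theorem c4_large_clique_general [Fintype V] (G : SimpleGraph V)
    (d e k : ℕ) (hd : d = Fintype.card V) (hd4 : 4 ≤ d)
    (hclique : ∃ s : Finset V, G.IsNClique (d - 1) s)
    (he : e = edgeCount G) (hek : e = Nat.choose (d - 1) 2 + k)
    (hk1 : 1 ≤ k) (hk2 : k ≤ d - 2) :
    (Nat.choose (e + 1 - d) 2 : ℚ) - c4 G =
      ((d : ℚ) - 4) * ((k : ℚ) - 1) * ((d : ℚ) - 1 - k) / 2 ∧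
    0 ≤ ((d : ℚ) - 4) * ((k : ℚ) - 1) * ((d : ℚ) - 1 - k) / 2 ∧
    c4 G ≤ Nat.choose (e + 1 - d) 2 ∧
    (c4 G = Nat.choose (e + 1 - d) 2 ↔ d = 4 ∨ k = 1) := by
  classical
  have : Nonempty V := Fintype.card_pos_iff.1 (by omega)
  obtain ⟨s, hs⟩ := hclique
  obtain ⟨v, hv⟩ := (hd ▸ hs).exists_isClique_compl_singleton
  have hdeg : G.degree v = k := by
    have := hv.card_edgeFinset_eq_choose_add_degree
    rw [← hd] at this
    rw [edgeCount, Nat.card_eq_fintype_card, ← edgeFinset_card] at he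
    omega
  have hc4 : c4 G = 3 * (d - 1).choose 4 + (d - 3) * k.choose 2 := by
    rw [hd, ← hdeg]
    exact hv.c4_eq_choose_add_choose (by omega)
  have key : (Nat.choose (e + 1 - d) 2 : ℚ) - c4 G =
      ((d : ℚ) - 4) * ((k : ℚ) - 1) * ((d : ℚ) - 1 - k) / 2 := by
    rw [hc4, hek, cast_choose_sub_c4_formula _ _ hd4]
  have hd4' : (4 : ℚ) ≤ d := by exact_mod_cast hd4
  have hk1' : (1 : ℚ) ≤ k := by exact_mod_cast hk1
  have hk2' : (k : ℚ) + 1 < d := by exact_mod_cast (by omega : k + 1 < d)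
  have hnonneg : 0 ≤ ((d : ℚ) - 4) * ((k : ℚ) - 1) * ((d : ℚ) - 1 - k) / 2 :=
    div_nonneg (mul_nonneg (mul_nonneg (by linarith) (by linarith)) (by linarith)) zero_le_two
  refine ⟨key, hnonneg, by exact_mod_cast sub_nonneg.1 (key ▸ hnonneg), ?_⟩
  rw [← Nat.cast_inj (R := ℚ), eq_comm, ← sub_eq_zero, key]
  have hne : (d : ℚ) - 1 - k ≠ 0 := by linarith
  simp only [div_eq_zero_iff, mul_eq_zero, hne, sub_eq_zero, OfNat.ofNat_ne_zero, or_false]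
  norm_cast

/-- For a connected graph `G` on `d ≥ 4` vertices containing
`K_{d-1}`, with `e = C(d-1,2) + k` edges, `1 ≤ k ≤ d-2`, one has
`C(e-d+1,2) − c₄(G) = (d-4)(k-1)(d-1-k)/2 ≥ 0`; in particular
`c₄(G) ≤ C(e-d+1,2)`, with equality iff `d = 4` or `k = 1`. -/
theorem c4_large_clique [Fintype V] (G : SimpleGraph V) (hconn : G.Connected)
    (d e k : ℕ) (hd : d = Fintype.card V) (hd4 : 4 ≤ d)
    (hclique : ∃ s : Finset V, G.IsNClique (d - 1) s)
    (he : e = edgeCount G) (hek : e = Nat.choose (d - 1) 2 + k)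
    (hk1 : 1 ≤ k) (hk2 : k ≤ d - 2) :
    (Nat.choose (e + 1 - d) 2 : ℚ) - c4 G =
      ((d : ℚ) - 4) * ((k : ℚ) - 1) * ((d : ℚ) - 1 - k) / 2 ∧
    0 ≤ ((d : ℚ) - 4) * ((k : ℚ) - 1) * ((d : ℚ) - 1 - k) / 2 ∧
    c4 G ≤ Nat.choose (e + 1 - d) 2 ∧
    (c4 G = Nat.choose (e + 1 - d) 2 ↔ d = 4 ∨ k = 1) :=
  c4_large_clique_general G d e k hd hd4 hclique he hek hk1 hk2
end

section
/- Let G be a connected graph with d vertices and e edges having at least one odd cycle and minimum degree δ(G) ≥ 12. Then c_4(G) ≤ C(e-d+1, 2). -/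
open SimpleGraph

variable {V : Type*}

/-! Fix an ordered edge `ij` and write `dᵥ` for degrees, `n` and `e` for the numbers of vertices
and edges. The completions `(k, l)` of a 4-cycle `i j k l` are among the pairs of distinct vertices of
`(N(j) \ {i}) × (N(i) \ {j})`, and `|N(i) ∩ N(j)| ≥ dᵢ + dⱼ - n`, so there are at most
`(dᵢ - 2)(dⱼ - 2) + n - 3` of them. Summed over the ordered edges, `Σ (dᵢ - 2)(dⱼ - 2)` is what is
left of `(Σᵥ (dᵥ - 2))² = (2e - 2n)²` after removing the diagonal and the non-adjacent pairs; once
all degrees are at least 4, the non-adjacent pair `(i, j)` contributes at least `dᵢ`. The degree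
sums then collapse to `8 c₄ ≤ 4 (e - n)(e - n + 1)`. -/

open Finset

theorem Finset.card_filter_product_ne_add_card_inter {α : Type*} [DecidableEq α]
    (s t : Finset α) : #((s ×ˢ t).filter fun q => q.1 ≠ q.2) + #(s ∩ t) = #s * #t := by
  rw [← card_product, ← card_filter_add_card_filter_not (s := s ×ˢ t) (fun q => q.1 ≠ q.2)]
  have hdiag : ((s ×ˢ t).filter fun q => ¬q.1 ≠ q.2) = (s ∩ t).diag := by
    ext ⟨a, b⟩
    simp only [mem_filter, mem_product, mem_inter, mem_diag, not_not]
    grind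
  rw [hdiag, diag_card]

namespace SimpleGraph

variable [Fintype V] (G : SimpleGraph V) [DecidableRel G.Adj]

theorem c4_eq_sum_c4edge_div_eight :
    c4 G = (∑ i, ∑ j ∈ G.neighborFinset i, c4edge G i j) / 8 := by
  classical
  rw [c4, Nat.card_eq_fintype_card, Fintype.card_subtype, card_filter]
  congr 1
  simp only [Fintype.sum_prod_type]
  refine sum_congr rfl fun i _ => ?_
  rw [neighborFinset_eq_filter, sum_filter]
  refine sum_congr rfl fun j _ => ?_
  split_ifs with hij
  · rw [c4edge, Nat.card_eq_fintype_card, Fintype.card_subtype, card_filter, Fintype.sum_prod_type]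
    simp [hij, eq_comm]
  · simp [hij]

theorem c3edge_eq_card_inter [DecidableEq V] (i j : V) :
    c3edge G i j = #(G.neighborFinset i ∩ G.neighborFinset j) := by
  rw [c3edge, Nat.card_eq_fintype_card, Fintype.card_subtype]
  congr 1
  ext k
  simp

theorem degree_add_degree_le_c3edge_add_card (i j : V) :
    G.degree i + G.degree j ≤ c3edge G i j + Fintype.card V := by
  classical
  rw [c3edge_eq_card_inter, ← card_neighborFinset_eq_degree, ← card_neighborFinset_eq_degree,
    ← card_inter_add_card_union]
  exact Nat.add_le_add_left (card_le_univ _) _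

theorem c4edge_add_c3edge_le {i j : V} (h : G.Adj i j) :
    c4edge G i j + c3edge G i j ≤ (G.degree i - 1) * (G.degree j - 1) := by
  classical
  have hdi : G.degree i - 1 = #((G.neighborFinset i).erase j) := by
    rw [card_erase_of_mem (by simpa using h), card_neighborFinset_eq_degree]
  have hdj : G.degree j - 1 = #((G.neighborFinset j).erase i) := by
    rw [card_erase_of_mem (by simpa using h.symm), card_neighborFinset_eq_degree]
  rw [hdi, hdj, mul_comm, ← card_filter_product_ne_add_card_inter]
  gcongr
  · rw [c4edge, Nat.card_eq_fintype_card, Fintype.card_subtype]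
    gcongr
    intro ⟨k, l⟩
    simp only [mem_filter, mem_univ, true_and, mem_product, mem_erase, mem_neighborFinset]
    rintro ⟨hjk, hkl, hli, hki, hlj⟩
    exact ⟨⟨⟨hki, hjk⟩, ⟨hlj, hli.symm⟩⟩, hkl.ne⟩
  · rw [c3edge_eq_card_inter]
    refine le_of_eq (congrArg card (ext fun k => ?_))
    simp only [mem_inter, mem_erase, mem_neighborFinset]
    exact ⟨fun ⟨hik, hjk⟩ => ⟨⟨hik.ne', hjk⟩, hjk.ne', hik⟩, fun ⟨⟨_, hjk⟩, _, hik⟩ => ⟨hik, hjk⟩⟩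

theorem c4edge_le_of_adj {i j : V} (h : G.Adj i j) :
    (c4edge G i j : ℤ) ≤ (G.degree i - 2) * (G.degree j - 2) + Fintype.card V - 3 := by
  have hcycle := G.c4edge_add_c3edge_le h
  have hcommon := G.degree_add_degree_le_c3edge_add_card i j
  have hi : 1 ≤ G.degree i := G.degree_pos_iff_exists_adj i |>.mpr ⟨j, h⟩
  have hj : 1 ≤ G.degree j := G.degree_pos_iff_exists_adj j |>.mpr ⟨i, h.symm⟩
  zify [hi, hj] at hcycle hcommon
  linarith

theorem sum_neighborFinset_mul_add_le (h4 : ∀ v, 4 ≤ G.degree v) (i : V) :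
    (G.degree i - 2 : ℤ) * ∑ j ∈ G.neighborFinset i, (G.degree j - 2 : ℤ)
        + ((Fintype.card V - 5) * G.degree i + 4)
      ≤ (G.degree i - 2) * ∑ j, (G.degree j - 2 : ℤ) := by
  classical
  set x : V → ℤ := fun v => G.degree v - 2
  set far := univ \ insert i (G.neighborFinset i)
  have hi : i ∉ G.neighborFinset i := by simp
  have hfar : ∀ j ∈ far, (G.degree i : ℤ) ≤ x i * x j := by
    intro j _
    have := h4 i
    have := h4 j
    simp only [x]
    nlinarith
  have hcard : (#far : ℤ) = Fintype.card V - 1 - G.degree i := by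
    rw [card_sdiff_of_subset (subset_univ _), card_insert_of_notMem hi, card_univ,
      card_neighborFinset_eq_degree, Nat.cast_sub (G.degree_lt_card_verts i)]
    push_cast
    ring
  have hsplit : ∑ j, x j = x i + ∑ j ∈ G.neighborFinset i, x j + ∑ j ∈ far, x j := by
    rw [← sum_insert hi, add_comm, sum_sdiff (subset_univ _)]
  have hfar_sum : #far * (G.degree i : ℤ) ≤ x i * ∑ j ∈ far, x j := by
    rw [mul_sum, ← nsmul_eq_mul, ← sum_const]
    exact sum_le_sum hfar
  rw [hsplit]
  rw [hcard] at hfar_sum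
  simp only [x] at hfar_sum ⊢
  linarith

theorem sum_sum_c4edge_le (h4 : ∀ v, 4 ≤ G.degree v) :
    (∑ i, ∑ j ∈ G.neighborFinset i, c4edge G i j : ℤ)
      ≤ 4 * ((#G.edgeFinset - Fintype.card V + 1) * (#G.edgeFinset - Fintype.card V)) := by
  have hdeg_sum : ∑ v, (G.degree v : ℤ) = 2 * #G.edgeFinset := by
    exact_mod_cast G.sum_degrees_eq_twice_card_edges
  set n : ℤ := (Fintype.card V : ℤ)
  set e : ℤ := (#G.edgeFinset : ℤ)
  set x : V → ℤ := fun v => G.degree v - 2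
  have hx_sum : ∑ v, x v = 2 * e - 2 * n := by
    simp only [x, sum_sub_distrib, hdeg_sum, sum_const, card_univ, nsmul_eq_mul, n]
    ring
  have hedge : ∑ i, ∑ j ∈ G.neighborFinset i, (c4edge G i j : ℤ)
      ≤ ∑ i, (x i * ∑ j ∈ G.neighborFinset i, x j + (n - 3) * G.degree i) := by
    refine sum_le_sum fun i _ => ?_
    rw [mul_sum, ← card_neighborFinset_eq_degree, mul_comm, ← nsmul_eq_mul, ← sum_const,
      ← sum_add_distrib]
    exact sum_le_sum fun j hj => by
      have := G.c4edge_le_of_adj ((G.mem_neighborFinset i j).mp hj)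
      simp only [x, n]
      linarith
  have hvertex := sum_le_sum fun i (_ : i ∈ univ) => G.sum_neighborFinset_mul_add_le h4 i
  rw [← sum_mul, hx_sum, sum_add_distrib, sum_add_distrib, ← mul_sum, hdeg_sum, sum_const,
    card_univ, nsmul_eq_mul] at hvertex
  rw [sum_add_distrib, ← mul_sum, hdeg_sum] at hedge
  linarith

theorem c4_le_choose (h4 : ∀ v, 4 ≤ G.degree v) :
    c4 G ≤ (#G.edgeFinset + 1 - Fintype.card V).choose 2 := by
  have hcard_le : Fintype.card V ≤ #G.edgeFinset := by
    have hsum : ∑ _v : V, 4 ≤ ∑ v, G.degree v := sum_le_sum fun v _ => h4 v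
    rw [G.sum_degrees_eq_twice_card_edges, sum_const, card_univ, smul_eq_mul] at hsum
    omega
  obtain ⟨m, hm⟩ := Nat.exists_eq_add_of_le hcard_le
  have hchoose : 8 * (m + 1).choose 2 = 4 * ((m + 1) * m) := by
    have : (m + 1) * m = (m + 1).choose 2 * 2 := by simpa using Nat.add_one_mul_choose_eq m 1
    omega
  have hbound := G.sum_sum_c4edge_le h4
  rw [hm, Nat.cast_add, add_sub_cancel_left] at hbound
  rw [c4_eq_sum_c4edge_div_eight, hm, show Fintype.card V + m + 1 - Fintype.card V = m + 1 by omega]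
  refine Nat.div_le_of_le_mul ?_
  rw [hchoose]
  exact_mod_cast hbound

end SimpleGraph

theorem c4_deg_twelve_general [Fintype V] (G : SimpleGraph V)
    (d e : ℕ) (hd : d = Fintype.card V) (he : e = edgeCount G)
    (hδ : 12 ≤ minDeg G) :
    c4 G ≤ Nat.choose (e + 1 - d) 2 := by
  classical
  have h4 : ∀ v, 4 ≤ G.degree v := fun v => by
    have : minDeg G ≤ deg G v := Nat.sInf_le ⟨v, rfl⟩
    rw [deg, Nat.card_eq_fintype_card, card_neighborSet_eq_degree] at this
    omega
  rw [hd, he, edgeCount, ← coe_edgeFinset, Nat.card_coe_set_eq, Set.ncard_coe_finset]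
  exact G.c4_le_choose h4

/-- A connected graph `G` with `d` vertices, `e` edges, at least
one odd cycle and minimum degree `≥ 12` satisfies `c₄(G) ≤ C(e-d+1, 2)`. -/
theorem c4_deg_twelve [Fintype V] (G : SimpleGraph V) (hconn : G.Connected)
    (hodd : HasOddCycle G) (d e : ℕ) (hd : d = Fintype.card V) (he : e = edgeCount G)
    (hδ : 12 ≤ minDeg G) :
    c4 G ≤ Nat.choose (e + 1 - d) 2 :=
  c4_deg_twelve_general G d e hd he hδ
end

section
/- Let G be a connected graph obtained as the union of two connected graphs H₁ and H₂ sharing exactly one vertex, where H_i has p_i vertices and q_i edges. If c_4(H_i) ≤ C(q_i − p_i + 1 + ε(H_i), 2) for i = 1, 2, then c_4(G) ≤ C(e − d + 1 + ε(G), 2), where d = p₁ + p₂ − 1, e = q₁ + q₂, and ε(H) = 1 if H is bipartite and 0 otherwise. -/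
open SimpleGraph

variable {V : Type*}

open Classical in
/-- `ε(G) = 1` if `G` is bipartite and `0` otherwise. -/
noncomputable def eps {W : Type*} (G : SimpleGraph W) : ℕ :=
  if G.Colorable 2 then 1 else 0

/-!
Every 4-cycle of `G` lies inside `H₁` or inside `H₂`: a 4-cycle with a vertex outside `H₁` has
both neighbours of that vertex in `H₂`, and if it also left `H₂` those two distinct neighbours
would both be the cut vertex. So the ordered 4-cycle tuples of `G` split between `H₁` and `H₂`,
and since each count is divisible by 8, `c₄(G) = c₄(H₁) + c₄(H₂)`.

A connected graph has `p ≤ q + ε`: always `p ≤ q + 1`, and equality makes it a tree, hence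
bipartite. So both binomial arguments `a, b` of the hypotheses are at least 1, and then
`C(a,2) + C(b,2) ≤ C(a+b-1,2)`. Finally `ε(H₁) + ε(H₂) ≤ 1 + ε(G)`, because 2-colourings of
`H₁` and `H₂` can be glued at the cut vertex.
-/

theorem Nat.card_eq_two_mul_card_of_involutive {X : Type*} [Finite X] {P Q : X → Prop}
    {f : X → X} (hf : Function.Involutive f) (hP : ∀ x, P x → P (f x))
    (hQ : ∀ x, P x → (Q (f x) ↔ ¬ Q x)) :
    Nat.card {x // P x} = 2 * Nat.card {x // P x ∧ Q x} := by
  classical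
  have hsplit :
      Nat.card {x // P x} = Nat.card {x // P x ∧ Q x} + Nat.card {x // P x ∧ ¬ Q x} := by
    rw [← Nat.card_sum]
    exact Nat.card_congr <| (Equiv.sumCompl fun x : {x // P x} => Q x).symm.trans <|
      (Equiv.subtypeSubtypeEquivSubtypeInter P Q).sumCongr
        (Equiv.subtypeSubtypeEquivSubtypeInter P (¬ Q ·))
  have hswap : Nat.card {x // P x ∧ Q x} = Nat.card {x // P x ∧ ¬ Q x} :=
    Nat.card_congr <| (hf.toPerm f).subtypeEquiv fun x => by
      refine ⟨fun ⟨hx, hq⟩ => ⟨hP x hx, fun h => (hQ x hx).1 h hq⟩, fun ⟨hx, hq⟩ => ?_⟩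
      have hx' : P x := hf x ▸ hP _ hx
      exact ⟨hx', not_not.1 ((hQ x hx').not.1 hq)⟩
  omega

lemma Nat.choose_two_add_choose_two_le {a b : ℕ} (ha : 1 ≤ a) (hb : 1 ≤ b) :
    a.choose 2 + b.choose 2 ≤ (a + b - 1).choose 2 := by
  suffices (a.choose 2 + b.choose 2 : ℚ) ≤ (a + b - 1).choose 2 by exact_mod_cast this
  rw [Nat.cast_choose_two, Nat.cast_choose_two, Nat.cast_choose_two,
    Nat.cast_sub (by omega : 1 ≤ a + b)]
  have ha' : (1 : ℚ) ≤ a := by exact_mod_cast ha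
  have hb' : (1 : ℚ) ≤ b := by exact_mod_cast hb
  push_cast
  nlinarith [mul_nonneg (sub_nonneg.2 ha') (sub_nonneg.2 hb')]

namespace SimpleGraph

def fourCycleTuples (G : SimpleGraph V) : Set (V × V × V × V) :=
  {p | G.Adj p.1 p.2.1 ∧ G.Adj p.2.1 p.2.2.1 ∧ G.Adj p.2.2.1 p.2.2.2 ∧ G.Adj p.2.2.2 p.1 ∧
    p.1 ≠ p.2.2.1 ∧ p.2.1 ≠ p.2.2.2}

lemma c4_eq_card_fourCycleTuples_div (G : SimpleGraph V) :
    c4 G = Nat.card G.fourCycleTuples / 8 :=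
  rfl

lemma eight_dvd_card_fourCycleTuples [Finite V] (G : SimpleGraph V) :
    8 ∣ Nat.card G.fourCycleTuples := by
  let : LinearOrder V := IsWellOrder.linearOrder WellOrderingRel
  -- The symmetry group of the square (order 8) acts freely on the tuples; halve the count
  -- along three involutions generating it, each time keeping the tuples where a comparison holds.
  have lt_comm_iff {a b : V} (hne : a ≠ b) : b < a ↔ ¬ a < b :=
    ⟨lt_asymm, fun h => hne.lt_or_gt.resolve_left h⟩
  have hreverse : Nat.card G.fourCycleTuples =
      2 * Nat.card {p // p ∈ G.fourCycleTuples ∧ p.2.1 < p.2.2.2} :=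
    Nat.card_eq_two_mul_card_of_involutive (f := fun p => (p.1, p.2.2.2, p.2.2.1, p.2.1))
      (fun _ => rfl)
      (fun _ ⟨h₁, h₂, h₃, h₄, h₅, h₆⟩ => ⟨h₄.symm, h₃.symm, h₂.symm, h₁.symm, h₅, h₆.symm⟩)
      (fun _ hp => lt_comm_iff hp.2.2.2.2.2)
  have hflip : Nat.card {p // p ∈ G.fourCycleTuples ∧ p.2.1 < p.2.2.2} =
      2 * Nat.card {p // (p ∈ G.fourCycleTuples ∧ p.2.1 < p.2.2.2) ∧ p.1 < p.2.2.1} :=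
    Nat.card_eq_two_mul_card_of_involutive (f := fun p => (p.2.2.1, p.2.1, p.1, p.2.2.2))
      (fun _ => rfl)
      (fun _ ⟨⟨h₁, h₂, h₃, h₄, h₅, h₆⟩, hbd⟩ =>
        ⟨⟨h₂.symm, h₁.symm, h₄.symm, h₃.symm, h₅.symm, h₆⟩, hbd⟩)
      (fun _ hp => lt_comm_iff hp.1.2.2.2.2.1)
  have hswap : Nat.card {p // (p ∈ G.fourCycleTuples ∧ p.2.1 < p.2.2.2) ∧ p.1 < p.2.2.1} =
      2 * Nat.card {p // ((p ∈ G.fourCycleTuples ∧ p.2.1 < p.2.2.2) ∧ p.1 < p.2.2.1) ∧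
        p.1 < p.2.1} :=
    Nat.card_eq_two_mul_card_of_involutive (f := fun p => (p.2.1, p.1, p.2.2.2, p.2.2.1))
      (fun _ => rfl)
      (fun _ ⟨⟨⟨h₁, h₂, h₃, h₄, h₅, h₆⟩, hbd⟩, hac⟩ =>
        ⟨⟨⟨h₁.symm, h₄.symm, h₃.symm, h₂.symm, h₆, h₅⟩, hac⟩, hbd⟩)
      (fun _ hp => lt_comm_iff (G.ne_of_adj hp.1.1.1))
  exact ⟨_, by rw [hreverse, hflip, hswap]; ring⟩

lemma card_fourCycleTuples_induce (G : SimpleGraph V) (s : Set V) :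
    Nat.card (G.induce s).fourCycleTuples =
      Nat.card ↥(G.fourCycleTuples ∩ s ×ˢ s ×ˢ s ×ˢ s) := by
  let ι : s × s × s × s → V × V × V × V :=
    Prod.map Subtype.val (Prod.map Subtype.val (Prod.map Subtype.val Subtype.val))
  have hι : ι.Injective := Subtype.val_injective.prodMap
    (Subtype.val_injective.prodMap (Subtype.val_injective.prodMap Subtype.val_injective))
  rw [← Nat.card_image_of_injective hι]
  congr 2
  ext ⟨a, b, c, d⟩
  simp only [fourCycleTuples, comap_adj, Function.Embedding.subtype_apply, ne_eq,
    Subtype.ext_iff, Set.mem_image, Set.mem_ofPred_eq, Prod.exists, Prod.map_apply,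
    Prod.mk.injEq, Subtype.exists, exists_and_left, exists_prop, ↓existsAndEq, and_true,
    true_and, Set.mem_inter_iff, Set.mem_prod, and_congr_right_iff, and_imp, ι]
  tauto

section CutVertex

variable {G : SimpleGraph V} {s t : Set V} {v₀ : V}
  (hst : s ∩ t = {v₀}) (huniv : s ∪ t = Set.univ)
  (hedges : ∀ a b : V, G.Adj a b → (a ∈ s ∧ b ∈ s) ∨ (a ∈ t ∧ b ∈ t))
include hst huniv hedges

lemma fourCycle_mem_of_not_mem {a b c d : V} (hab : G.Adj a b) (hbc : G.Adj b c)
    (hcd : G.Adj c d) (hda : G.Adj d a) (hbd : b ≠ d)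
    (ha : a ∉ s) : a ∈ t ∧ b ∈ t ∧ c ∈ t ∧ d ∈ t := by
  have hb : b ∈ t := ((hedges a b hab).resolve_left fun h => ha h.1).2
  have hd : d ∈ t := ((hedges d a hda).resolve_left fun h => ha h.2).1
  refine ⟨(huniv.symm ▸ Set.mem_univ a).resolve_left ha, hb, ?_, hd⟩
  by_contra hc
  -- `b` and `d` both join `c ∈ s \ t` by an edge, so both lie in `s ∩ t = {v₀}`
  have hbs : b ∈ s := ((hedges b c hbc).resolve_right fun h => hc h.2).1
  have hds : d ∈ s := ((hedges c d hcd).resolve_right fun h => hc h.1).2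
  have hb₀ : b = v₀ := Set.eq_of_mem_singleton (hst ▸ Set.mem_inter hbs hb)
  have hd₀ : d = v₀ := Set.eq_of_mem_singleton (hst ▸ Set.mem_inter hds hd)
  exact hbd (hb₀.trans hd₀.symm)

lemma fourCycleTuples_subset_union :
    G.fourCycleTuples ⊆ s ×ˢ s ×ˢ s ×ˢ s ∪ t ×ˢ t ×ˢ t ×ˢ t := by
  rintro ⟨a, b, c, d⟩ ⟨hab, hbc, hcd, hda, hac, hbd⟩
  refine or_iff_not_imp_left.2 fun hs => ?_
  simp only [Set.mem_prod, not_and_or] at hs ⊢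
  rcases hs with ha | hb | hc | hd
  · exact fourCycle_mem_of_not_mem hst huniv hedges hab hbc hcd hda hbd ha
  · obtain ⟨hb, hc, hd, ha⟩ :=
      fourCycle_mem_of_not_mem hst huniv hedges hbc hcd hda hab hac.symm hb
    exact ⟨ha, hb, hc, hd⟩
  · obtain ⟨hc, hd, ha, hb⟩ :=
      fourCycle_mem_of_not_mem hst huniv hedges hcd hda hab hbc hbd.symm hc
    exact ⟨ha, hb, hc, hd⟩
  · obtain ⟨hd, ha, hb, hc⟩ := fourCycle_mem_of_not_mem hst huniv hedges hda hab hbc hcd hac hd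
    exact ⟨ha, hb, hc, hd⟩

lemma card_fourCycleTuples_eq_add [Finite V] :
    Nat.card G.fourCycleTuples =
      Nat.card (G.induce s).fourCycleTuples + Nat.card (G.induce t).fourCycleTuples := by
  have hdisj : Disjoint (G.fourCycleTuples ∩ s ×ˢ s ×ˢ s ×ˢ s)
      (G.fourCycleTuples ∩ t ×ˢ t ×ˢ t ×ˢ t) := by
    refine Set.disjoint_left.2 fun p ⟨hp, hs⟩ ⟨_, ht⟩ => hp.2.2.2.2.1 ?_
    have ha : p.1 = v₀ := Set.eq_of_mem_singleton (hst ▸ Set.mem_inter hs.1 ht.1)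
    have hc : p.2.2.1 = v₀ := Set.eq_of_mem_singleton (hst ▸ Set.mem_inter hs.2.2.1 ht.2.2.1)
    exact ha.trans hc.symm
  rw [card_fourCycleTuples_induce, card_fourCycleTuples_induce, Nat.card_coe_set_eq,
    Nat.card_coe_set_eq, Nat.card_coe_set_eq, ← Set.ncard_union_eq hdisj,
    ← Set.inter_union_distrib_left,
    Set.inter_eq_left.2 (fourCycleTuples_subset_union hst huniv hedges)]

lemma c4_eq_add [Finite V] : c4 G = c4 (G.induce s) + c4 (G.induce t) := by
  simp only [c4_eq_card_fourCycleTuples_div, card_fourCycleTuples_eq_add hst huniv hedges]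
  exact Nat.add_div_of_dvd_right (eight_dvd_card_fourCycleTuples _)

lemma Colorable.of_induce_of_inter_eq_singleton {n : ℕ} (hs : (G.induce s).Colorable n)
    (ht : (G.induce t).Colorable n) : G.Colorable n := by
  classical
  obtain ⟨C₁⟩ := hs
  obtain ⟨C₂⟩ := ht
  have hv₀ : v₀ ∈ s ∩ t := hst ▸ rfl
  -- recolour `t` so that both colourings agree at the cut vertex
  let σ := Equiv.swap (C₂ ⟨v₀, hv₀.2⟩) (C₁ ⟨v₀, hv₀.1⟩)
  let F : V → Fin n := fun x =>
    if hx : x ∈ s then C₁ ⟨x, hx⟩ else σ (C₂ ⟨x, (huniv.symm ▸ Set.mem_univ x).resolve_left hx⟩)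
  have hF_t (x : V) (hx : x ∈ t) : F x = σ (C₂ ⟨x, hx⟩) := by
    by_cases hxs : x ∈ s
    · obtain rfl : x = v₀ := Set.eq_of_mem_singleton (hst ▸ Set.mem_inter hxs hx)
      simp [F, hxs, σ]
    · simp [F, hxs]
  refine ⟨Coloring.mk F fun {a b} hab heq => ?_⟩
  rcases hedges a b hab with ⟨ha, hb⟩ | ⟨ha, hb⟩
  · exact C₁.valid (show (G.induce s).Adj ⟨a, ha⟩ ⟨b, hb⟩ from hab)
      (by simpa [F, ha, hb] using heq)
  · rw [hF_t a ha, hF_t b hb] at heq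
    exact C₂.valid (show (G.induce t).Adj ⟨a, ha⟩ ⟨b, hb⟩ from hab) (σ.injective heq)

lemma eps_induce_add_eps_induce_le : eps (G.induce s) + eps (G.induce t) ≤ 1 + eps G := by
  have hglue := Colorable.of_induce_of_inter_eq_singleton (n := 2) hst huniv hedges
  unfold eps
  split_ifs with hs ht hG <;> first | omega | exact absurd (hglue hs ht) hG

end CutVertex

lemma Connected.card_le_edgeCount_add_eps [Finite V] {G : SimpleGraph V} (h : G.Connected) :
    Nat.card V ≤ edgeCount G + eps G := by
  have hle := h.card_vert_le_card_edgeSet_add_one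
  unfold edgeCount eps
  split_ifs with hcol
  · exact hle
  · have hne : Nat.card G.edgeSet + 1 ≠ Nat.card V := fun hcard =>
      hcol (isTree_iff_connected_and_card.2 ⟨h, hcard⟩).colorable_two
    omega

end SimpleGraph

theorem c4_one_vertex_union_general [Fintype V] (G : SimpleGraph V)
    (s t : Set V) (v₀ : V) (hst : s ∩ t = {v₀}) (huniv : s ∪ t = Set.univ)
    (hedges : ∀ a b : V, G.Adj a b → (a ∈ s ∧ b ∈ s) ∨ (a ∈ t ∧ b ∈ t))
    (h1conn : (G.induce s).Connected) (h2conn : (G.induce t).Connected)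
    (p₁ p₂ q₁ q₂ d e : ℕ)
    (hp₁ : p₁ = Nat.card s) (hp₂ : p₂ = Nat.card t)
    (hq₁ : q₁ = edgeCount (G.induce s)) (hq₂ : q₂ = edgeCount (G.induce t))
    (hd : d = p₁ + p₂ - 1) (he : e = q₁ + q₂)
    (h1 : c4 (G.induce s) ≤ Nat.choose (q₁ + 1 + eps (G.induce s) - p₁) 2)
    (h2 : c4 (G.induce t) ≤ Nat.choose (q₂ + 1 + eps (G.induce t) - p₂) 2) :
    c4 G ≤ Nat.choose (e + 1 + eps G - d) 2 := by
  have hs : p₁ ≤ q₁ + eps (G.induce s) := hp₁ ▸ hq₁ ▸ h1conn.card_le_edgeCount_add_eps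
  have ht : p₂ ≤ q₂ + eps (G.induce t) := hp₂ ▸ hq₂ ▸ h2conn.card_le_edgeCount_add_eps
  have hp₁_pos : 0 < p₁ := hp₁ ▸ have := h1conn.nonempty; Nat.card_pos
  have hε := eps_induce_add_eps_induce_le hst huniv hedges
  calc c4 G = c4 (G.induce s) + c4 (G.induce t) := c4_eq_add hst huniv hedges
    _ ≤ (q₁ + 1 + eps (G.induce s) - p₁).choose 2 + (q₂ + 1 + eps (G.induce t) - p₂).choose 2 :=
      add_le_add h1 h2
    _ ≤ (q₁ + 1 + eps (G.induce s) - p₁ + (q₂ + 1 + eps (G.induce t) - p₂) - 1).choose 2 :=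
      Nat.choose_two_add_choose_two_le (by omega) (by omega)
    _ ≤ (e + 1 + eps G - d).choose 2 := Nat.choose_le_choose 2 (by omega)

/-- If a connected graph `G` is the union of connected graphs
`H₁ = G[s]` and `H₂ = G[t]` sharing exactly one vertex, with `p_i` vertices
and `q_i` edges, and `c₄(H_i) ≤ C(q_i − p_i + 1 + ε(H_i), 2)` for `i = 1,2`,
then `c₄(G) ≤ C(e − d + 1 + ε(G), 2)` where `d = p₁ + p₂ − 1`, `e = q₁ + q₂`. -/
theorem c4_one_vertex_union [Fintype V] (G : SimpleGraph V) (hconn : G.Connected)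
    (s t : Set V) (v₀ : V) (hst : s ∩ t = {v₀}) (huniv : s ∪ t = Set.univ)
    (hedges : ∀ a b : V, G.Adj a b → (a ∈ s ∧ b ∈ s) ∨ (a ∈ t ∧ b ∈ t))
    (h1conn : (G.induce s).Connected) (h2conn : (G.induce t).Connected)
    (p₁ p₂ q₁ q₂ d e : ℕ)
    (hp₁ : p₁ = Nat.card s) (hp₂ : p₂ = Nat.card t)
    (hq₁ : q₁ = edgeCount (G.induce s)) (hq₂ : q₂ = edgeCount (G.induce t))
    (hd : d = p₁ + p₂ - 1) (he : e = q₁ + q₂)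
    (h1 : c4 (G.induce s) ≤ Nat.choose (q₁ + 1 + eps (G.induce s) - p₁) 2)
    (h2 : c4 (G.induce t) ≤ Nat.choose (q₂ + 1 + eps (G.induce t) - p₂) 2) :
    c4 G ≤ Nat.choose (e + 1 + eps G - d) 2 :=
  c4_one_vertex_union_general G s t v₀ hst huniv hedges h1conn h2conn p₁ p₂ q₁ q₂ d e hp₁ hp₂ hq₁
    hq₂ hd he h1 h2
end
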